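/- arXiv:2501.13225 — 6 statements merged into one kernel-verified Lean document; each statement's English description precedes it below -/
import Mathlib

section
/- For the absolute value function, its dual function satisfies $\hat{|\cdot|}(\rho) = \frac{2}{\pi}(\rho \arcsin(\rho) + \sin(\arccos(\rho)))$ for all $\rho \in [-1,1]$, where the dual function of $f$ is $\hat{f}(\rho) = \mathbb{E}[f(U_1)f(U_2)]$ with $(U_1,U_2)$ jointly Gaussian, standard marginals and correlation $\rho$. -/
/-!
Put `α = arccos ρ ∈ [0, π]`, so that `ρ = cos α` and `√(1 - ρ²) = sin α`. In polar
coordinates `(x, y) = (r cos θ, r sin θ)` the integrand `|x| |ρ x + √(1 - ρ²) y|` becomes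
`r² |cos θ cos (θ - α)|`, so against the standard Gaussian on the plane the integral factors
as `(2π)⁻¹ (∫₀^∞ r³ e^{-r²/2} dr) (∫_{-π}^{π} |cos θ cos (θ - α)| dθ)`, and the radial factor
is `2`. The angular integrand has period `π`, and on the period `[α - π/2, α + π/2]` it
changes sign only at `π/2`; integrating `cos θ cos (θ - α) = (cos α + cos (2θ - α)) / 2` over
the two pieces gives `(π/2 - α) cos α + sin α = ρ arcsin ρ + sin (arccos ρ)` per period.
-/

open MeasureTheory ProbabilityTheory Real

/-- The dual function of `f ∈ L²(N(0,1))`: `f̂(ρ) = E[f(U₁)f(U₂)]` where `(U₁,U₂)` is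
jointly Gaussian with standard marginals and correlation `ρ`, realized as
`U₁ = X`, `U₂ = ρX + √(1-ρ²)Y` with `X, Y` independent standard Gaussians. -/
noncomputable def dualFn (f : ℝ → ℝ) (ρ : ℝ) : ℝ :=
  ∫ x, ∫ y, f x * f (ρ * x + Real.sqrt (1 - ρ ^ 2) * y)
    ∂(gaussianReal 0 1) ∂(gaussianReal 0 1)

lemma gaussianPDFReal_zero_one_mul (x y : ℝ) :
    gaussianPDFReal 0 1 x * gaussianPDFReal 0 1 y = (2 * π)⁻¹ * exp (-(x ^ 2 + y ^ 2) / 2) := by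
  have h2π : (√(2 * π))⁻¹ * (√(2 * π))⁻¹ = (2 * π)⁻¹ := by
    rw [← mul_inv, mul_self_sqrt (by positivity)]
  simp only [gaussianPDFReal, NNReal.coe_one, mul_one, sub_zero]
  rw [mul_mul_mul_comm, h2π, ← exp_add]
  ring_nf

lemma integral_prod_gaussianReal_eq_integral_polarCoord {E : Type*} [NormedAddCommGroup E]
    [NormedSpace ℝ E] (F : ℝ × ℝ → E) :
    ∫ z, F z ∂(gaussianReal 0 1).prod (gaussianReal 0 1) =
      (2 * π)⁻¹ •
        ∫ p in polarCoord.target, (p.1 * exp (-p.1 ^ 2 / 2)) • F (polarCoord.symm p) := by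
  have hpdf := measurable_gaussianPDF (0 : ℝ) 1
  rw [gaussianReal_of_var_ne_zero _ one_ne_zero, prod_withDensity hpdf hpdf,
    ← Measure.volume_eq_prod, integral_withDensity_eq_integral_toReal_smul (by fun_prop)
      (ae_of_all _ fun _ => ENNReal.mul_lt_top gaussianPDF_lt_top gaussianPDF_lt_top),
    ← integral_comp_polarCoord_symm, ← integral_smul]
  refine integral_congr_ae (ae_of_all _ fun p => ?_)
  obtain ⟨r, θ⟩ := p
  have hr : (r * cos θ) ^ 2 + (r * sin θ) ^ 2 = r ^ 2 := by
    linear_combination r ^ 2 * sin_sq_add_cos_sq θ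
  simp only [polarCoord_symm_apply, ENNReal.toReal_mul, toReal_gaussianPDF,
    gaussianPDFReal_zero_one_mul, hr, smul_smul]
  congr 1
  ring

lemma integrable_abs_mul_abs_prod_gaussianReal (a b : ℝ) :
    Integrable (fun z : ℝ × ℝ => |z.1| * |a * z.1 + b * z.2|)
      ((gaussianReal 0 1).prod (gaussianReal 0 1)) := by
  have hL2 : MemLp id 2 (gaussianReal 0 1) := memLp_id_gaussianReal 2
  have h1 : MemLp (fun z : ℝ × ℝ => z.1) 2 ((gaussianReal 0 1).prod (gaussianReal 0 1)) :=
    hL2.comp_fst _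
  have h2 : MemLp (fun z : ℝ × ℝ => z.2) 2 ((gaussianReal 0 1).prod (gaussianReal 0 1)) :=
    hL2.comp_snd _
  exact h1.abs.integrable_mul ((h1.const_mul a).add (h2.const_mul b)).abs

lemma integral_Ioi_pow_three_mul_exp_neg_sq_div_two :
    ∫ r in Set.Ioi (0 : ℝ), r ^ 3 * exp (-r ^ 2 / 2) = 2 := by
  have h := integral_rpow_mul_exp_neg_mul_rpow (p := 2) (q := 3) (b := 1 / 2)
    (by norm_num) (by norm_num) (by norm_num)
  norm_num at h
  convert h using 5 with r
  ring

lemma integral_cos_mul_cos_sub (α a b : ℝ) :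
    ∫ θ in a..b, cos θ * cos (θ - α) =
      (b - a) * cos α / 2 + (sin (2 * b - α) - sin (2 * a - α)) / 4 := by
  have hderiv (θ : ℝ) : HasDerivAt (fun t => t * cos α / 2 + sin (2 * t - α) / 4)
      (cos θ * cos (θ - α)) θ := by
    have h := (((hasDerivAt_id θ).const_mul 2).sub_const α).sin
    refine (((hasDerivAt_id θ).mul_const (cos α)).div_const 2 |>.add
      (h.div_const 4)).congr_deriv ?_
    have h2 : 2 * cos θ * cos (θ - α) = cos α + cos (2 * θ - α) := by
      rw [two_mul_cos_mul_cos]; ring_nf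
    simp only [id, one_mul, mul_one]
    linear_combination -h2 / 2
  rw [intervalIntegral.integral_eq_sub_of_hasDerivAt (fun θ _ => hderiv θ)
    ((by fun_prop : Continuous fun θ => cos θ * cos (θ - α)).intervalIntegrable a b)]
  ring

lemma periodic_abs_cos_mul_cos_sub (α : ℝ) :
    Function.Periodic (fun θ => |cos θ * cos (θ - α)|) π := fun θ => by
  simp only [add_sub_right_comm, cos_add_pi, neg_mul_neg]

lemma integral_abs_cos_mul_cos_sub_period (α : ℝ) (h₀ : 0 ≤ α) (hπ : α ≤ π) :
    ∫ θ in (α - π / 2)..(α - π / 2 + π), |cos θ * cos (θ - α)| =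
      (π / 2 - α) * cos α + sin α := by
  have hint (a b : ℝ) : IntervalIntegrable (fun θ => |cos θ * cos (θ - α)|) volume a b :=
    (by fun_prop : Continuous fun θ => |cos θ * cos (θ - α)|).intervalIntegrable a b
  rw [← intervalIntegral.integral_add_adjacent_intervals (hint _ (π / 2)) (hint _ _)]
  have hpos : ∫ θ in (α - π / 2)..(π / 2), |cos θ * cos (θ - α)| =
      ∫ θ in (α - π / 2)..(π / 2), cos θ * cos (θ - α) := by
    refine intervalIntegral.integral_congr fun θ hθ => abs_of_nonneg ?_
    rw [Set.uIcc_of_le (by linarith)] at hθ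
    exact mul_nonneg (cos_nonneg_of_mem_Icc ⟨by linarith [hθ.1], hθ.2⟩)
      (cos_nonneg_of_mem_Icc ⟨by linarith [hθ.1], by linarith [hθ.2]⟩)
  have hneg : ∫ θ in (π / 2)..(α - π / 2 + π), |cos θ * cos (θ - α)| =
      -∫ θ in (π / 2)..(α - π / 2 + π), cos θ * cos (θ - α) := by
    rw [← intervalIntegral.integral_neg]
    refine intervalIntegral.integral_congr fun θ hθ => abs_of_nonpos ?_
    rw [Set.uIcc_of_le (by linarith)] at hθ
    exact mul_nonpos_of_nonpos_of_nonneg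
      (cos_nonpos_of_pi_div_two_le_of_le hθ.1 (by linarith [hθ.2]))
      (cos_nonneg_of_mem_Icc ⟨by linarith [hθ.1], by linarith [hθ.2]⟩)
  have hs₁ : sin (2 * (π / 2) - α) = sin α := by rw [← sin_pi_sub]; ring_nf
  have hs₂ : sin (2 * (α - π / 2) - α) = -sin α := by rw [← sin_sub_pi]; ring_nf
  have hs₃ : sin (2 * (α - π / 2 + π) - α) = -sin α := by rw [← sin_add_pi]; ring_nf
  rw [hpos, hneg, integral_cos_mul_cos_sub, integral_cos_mul_cos_sub, hs₁, hs₂, hs₃]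
  ring

lemma integral_abs_cos_mul_cos_sub (α : ℝ) (h₀ : 0 ≤ α) (hπ : α ≤ π) :
    ∫ θ in (-π)..π, |cos θ * cos (θ - α)| = 2 * ((π / 2 - α) * cos α + sin α) := by
  have hper := periodic_abs_cos_mul_cos_sub α
  have h := hper.intervalIntegral_add_zsmul_eq 2 (-π)
    (by fun_prop : Continuous fun θ => |cos θ * cos (θ - α)|).intervalIntegrable
  rw [hper.intervalIntegral_add_eq (-π) (α - π / 2),
    integral_abs_cos_mul_cos_sub_period α h₀ hπ] at h
  rw [two_zsmul, two_zsmul] at h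
  convert h using 2 <;> ring

lemma integral_abs_mul_abs_cos_sin_prod_gaussianReal (α : ℝ) :
    ∫ z, |z.1| * |cos α * z.1 + sin α * z.2| ∂(gaussianReal 0 1).prod (gaussianReal 0 1) =
      π⁻¹ * ∫ θ in (-π)..π, |cos θ * cos (θ - α)| := by
  have hpolar (p : ℝ × ℝ) : p.1 * exp (-p.1 ^ 2 / 2) *
      (|(polarCoord.symm p).1| *
        |cos α * (polarCoord.symm p).1 + sin α * (polarCoord.symm p).2|) =
      p.1 ^ 3 * exp (-p.1 ^ 2 / 2) * |cos p.2 * cos (p.2 - α)| := by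
    obtain ⟨r, θ⟩ := p
    have hrot : cos α * (r * cos θ) + sin α * (r * sin θ) = r * cos (θ - α) := by
      rw [cos_sub]; ring
    simp only [polarCoord_symm_apply, hrot, abs_mul]
    linear_combination (r * exp (-r ^ 2 / 2) * |cos θ| * |cos (θ - α)|) * abs_mul_abs_self r
  have htarget : polarCoord.target = Set.Ioi 0 ×ˢ Set.Ioo (-π) π := rfl
  rw [integral_prod_gaussianReal_eq_integral_polarCoord]
  simp only [smul_eq_mul, hpolar]
  rw [htarget, Measure.volume_eq_prod,
    setIntegral_prod_mul (fun r => r ^ 3 * exp (-r ^ 2 / 2)) (fun θ => |cos θ * cos (θ - α)|),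
    integral_Ioi_pow_three_mul_exp_neg_sq_div_two, ← integral_Ioc_eq_integral_Ioo,
    ← intervalIntegral.integral_of_le (by linarith [pi_pos])]
  field_simp

theorem dual_abs (ρ : ℝ) (hρ : ρ ∈ Set.Icc (-1 : ℝ) 1) :
    dualFn (fun s => |s|) ρ =
      (2 / π) * (ρ * Real.arcsin ρ + Real.sin (Real.arccos ρ)) := by
  obtain ⟨hρ₁, hρ₂⟩ := hρ
  have h := integral_abs_mul_abs_cos_sin_prod_gaussianReal (arccos ρ)
  rw [integral_abs_cos_mul_cos_sub _ (arccos_nonneg ρ) (arccos_le_pi ρ), cos_arccos hρ₁ hρ₂,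
    sin_arccos] at h
  rw [dualFn, integral_integral (integrable_abs_mul_abs_prod_gaussianReal _ _), h,
    arcsin_eq_pi_div_two_sub_arccos, sin_arccos]
  ring
end

section
/- For the sign function, its dual function satisfies $\hat{\mathrm{sgn}}(\rho) = \frac{2}{\pi} \arcsin(\rho)$ for all $\rho \in [-1,1]$. -/
/-! Conditioning on the first coordinate, with `s = √(1 - ρ²) > 0` the inner integral is
`E[sgn(ρx + sY)] = centralMass (ρx / s)`, where `centralMass u = ∫_{-u}^{u} φ`. So for
`|ρ| < 1` the dual function is `F (ρ / s)` with `F a = E[sgn X · centralMass (a X)]`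
(`signCorrelation`). Differentiating under the integral,
`F' a = 2 E[|X| φ(aX)] = 2 / (π (1 + a²))`, a Gaussian moment; as `F 0 = 0`,
`F = (2/π) arctan`, and `arctan (ρ / √(1 - ρ²)) = arcsin ρ`. At `ρ = ±1` the integrand is
`sgn x · sgn (±x) = ±1` almost surely. -/

open MeasureTheory ProbabilityTheory Real

open Set Filter

namespace Real

lemma measurable_sign : Measurable sign :=
  Measurable.ite measurableSet_Iio measurable_const
    (Measurable.ite measurableSet_Ioi measurable_const measurable_const)

lemma abs_sign_le_one (x : ℝ) : |sign x| ≤ 1 := by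
  rcases sign_apply_eq x with h | h | h <;> simp [h]

lemma sign_mul_self_eq_abs (x : ℝ) : sign x * x = |x| := by
  rcases lt_trichotomy x 0 with h | rfl | h
  · rw [sign_of_neg h, abs_of_neg h, neg_one_mul]
  · simp
  · rw [sign_of_pos h, abs_of_pos h, one_mul]

lemma sign_mul (x y : ℝ) : sign (x * y) = sign x * sign y := by
  rcases lt_trichotomy x 0 with hx | rfl | hx <;>
  rcases lt_trichotomy y 0 with hy | rfl | hy <;>
  simp [sign_of_neg, sign_of_pos, mul_pos_of_neg_of_neg, mul_neg_of_neg_of_pos,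
    mul_neg_of_pos_of_neg, *]

end Real

lemma gaussianPDFReal_zero_neg (v : NNReal) (x : ℝ) :
    gaussianPDFReal 0 v (-x) = gaussianPDFReal 0 v x := by
  simp [gaussianPDFReal]

lemma gaussianPDFReal_zero_one_le_one (x : ℝ) : gaussianPDFReal 0 1 x ≤ 1 := by
  have h2π : 1 ≤ √(2 * π) := Real.one_le_sqrt.2 (by linarith [Real.pi_gt_three])
  have hexp : rexp (-x ^ 2 / 2) ≤ 1 := Real.exp_le_one_iff.2 (by nlinarith [sq_nonneg x])
  simp only [gaussianPDFReal, NNReal.coe_one, mul_one, sub_zero]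
  calc (√(2 * π))⁻¹ * rexp (-x ^ 2 / 2) ≤ 1 * 1 :=
        mul_le_mul (inv_le_one_of_one_le₀ h2π) hexp (by positivity) zero_le_one
    _ = 1 := mul_one 1

lemma gaussianPDFReal_mul_gaussianPDFReal_const_mul (a x : ℝ) :
    gaussianPDFReal 0 1 x * gaussianPDFReal 0 1 (a * x)
      = (2 * π)⁻¹ * rexp (-((1 + a ^ 2) / 2) * x ^ 2) := by
  simp only [gaussianPDFReal, NNReal.coe_one, mul_one, sub_zero]
  rw [mul_mul_mul_comm, ← exp_add, ← mul_inv, Real.mul_self_sqrt (by positivity)]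
  congr 2; ring

lemma integral_abs_mul_exp_neg_mul_sq {b : ℝ} (hb : 0 < b) :
    ∫ x, |x| * rexp (-b * x ^ 2) = b⁻¹ := by
  have hIoi : ∫ x in Ioi (0:ℝ), x * rexp (-b * x ^ 2) = (2 * b)⁻¹ := by
    have h : ∫ x in Ioi (0:ℝ), ((x * rexp (-b * x ^ 2) : ℝ) : ℂ) = ((2 * b)⁻¹ : ℝ) := by
      push_cast
      exact integral_mul_cexp_neg_mul_sq (by simpa using hb)
    exact_mod_cast h
  have habs : ∫ x, |x| * rexp (-b * x ^ 2) = ∫ x, |x| * rexp (-b * |x| ^ 2) := by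
    simp only [sq_abs]
  rw [habs, integral_comp_abs (f := fun x => x * rexp (-b * x ^ 2)), hIoi]
  field_simp

noncomputable def centralMass (u : ℝ) : ℝ := ∫ t in (-u)..u, gaussianPDFReal 0 1 t

lemma abs_centralMass_le_one (u : ℝ) : |centralMass u| ≤ 1 := by
  have hφ : ∀ t, |gaussianPDFReal 0 1 t| = gaussianPDFReal 0 1 t := fun t =>
    abs_of_nonneg (gaussianPDFReal_nonneg 0 1 t)
  calc |centralMass u| = ‖centralMass u‖ := (Real.norm_eq_abs _).symm
    _ ≤ ∫ t in uIoc (-u) u, ‖gaussianPDFReal 0 1 t‖ :=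
        intervalIntegral.norm_integral_le_integral_norm_uIoc
    _ ≤ ∫ t, gaussianPDFReal 0 1 t := by
        simp only [Real.norm_eq_abs, hφ]
        exact setIntegral_le_integral (integrable_gaussianPDFReal 0 1)
          (Eventually.of_forall (gaussianPDFReal_nonneg 0 1))
    _ = 1 := integral_gaussianPDFReal_eq_one 0 one_ne_zero

lemma hasDerivAt_centralMass (u : ℝ) :
    HasDerivAt centralMass (2 * gaussianPDFReal 0 1 u) u := by
  have hc : Continuous (gaussianPDFReal 0 1) := by unfold gaussianPDFReal; fun_prop
  have hprim : ∀ v, HasDerivAt (fun w => ∫ t in (0:ℝ)..w, gaussianPDFReal 0 1 t)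
      (gaussianPDFReal 0 1 v) v := fun v =>
    intervalIntegral.integral_hasDerivAt_right (hc.intervalIntegrable _ _)
      (hc.stronglyMeasurableAtFilter _ _) hc.continuousAt
  have hsplit : centralMass = fun u => (∫ t in (0:ℝ)..u, gaussianPDFReal 0 1 t)
      - ∫ t in (0:ℝ)..(-u), gaussianPDFReal 0 1 t := by
    funext u
    exact (intervalIntegral.integral_interval_sub_left (hc.intervalIntegrable _ _)
      (hc.intervalIntegrable _ _)).symm
  have hneg := (hprim (-u)).comp u (hasDerivAt_neg u)
  rw [gaussianPDFReal_zero_neg] at hneg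
  rw [hsplit]
  exact ((hprim u).sub hneg).congr_deriv (by ring)

lemma continuous_centralMass : Continuous centralMass :=
  continuous_iff_continuousAt.2 fun u => (hasDerivAt_centralMass u).continuousAt

lemma integral_sign_add_gaussianReal (u : ℝ) :
    ∫ y, Real.sign (u + y) ∂(gaussianReal 0 1) = centralMass u := by
  set φ := gaussianPDFReal 0 1
  have hφ : Integrable φ := integrable_gaussianPDFReal 0 1
  rw [integral_gaussianReal_eq_integral_smul one_ne_zero]
  have hae : (fun y => φ y • Real.sign (u + y)) =ᵐ[volume]
      fun y => (Ioi (-u)).indicator φ y - (Iio (-u)).indicator φ y := by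
    filter_upwards [compl_mem_ae_iff.2 (measure_singleton (-u))] with y hy
    rcases lt_or_gt_of_ne (show y ≠ -u from hy) with h | h
    · simp [Real.sign_of_neg (show u + y < 0 by linarith), indicator, h, h.not_gt]
    · simp [Real.sign_of_pos (show 0 < u + y by linarith), indicator, h, h.not_gt]
  have hIoi : ∫ t in Ioi (-u), φ t = ∫ t in Iic u, φ t := by
    rw [← neg_neg u, ← integral_comp_neg_Iic, neg_neg]
    simp only [φ, gaussianPDFReal_zero_neg]
  rw [integral_congr_ae hae, integral_sub (hφ.indicator measurableSet_Ioi)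
    (hφ.indicator measurableSet_Iio), integral_indicator measurableSet_Ioi,
    integral_indicator measurableSet_Iio, setIntegral_congr_set Iio_ae_eq_Iic, hIoi,
    centralMass, intervalIntegral.integral_Iic_sub_Iic hφ.integrableOn hφ.integrableOn]

noncomputable def signCorrelation (a : ℝ) : ℝ :=
  ∫ x, Real.sign x * centralMass (a * x) ∂(gaussianReal 0 1)

lemma integral_sign_mul_deriv_centralMass (a : ℝ) :
    ∫ x, Real.sign x * (2 * gaussianPDFReal 0 1 (a * x) * x) ∂(gaussianReal 0 1)
      = 2 / π * (1 + a ^ 2)⁻¹ := by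
  have hb : 0 < (1 + a ^ 2) / 2 := by positivity
  have hpt : ∀ x, gaussianPDFReal 0 1 x • (Real.sign x * (2 * gaussianPDFReal 0 1 (a * x) * x))
      = π⁻¹ * (|x| * rexp (-((1 + a ^ 2) / 2) * x ^ 2)) := fun x => by
    rw [smul_eq_mul, ← Real.sign_mul_self_eq_abs]
    linear_combination (2 * Real.sign x * x) * gaussianPDFReal_mul_gaussianPDFReal_const_mul a x
  rw [integral_gaussianReal_eq_integral_smul one_ne_zero]
  simp only [hpt]
  rw [integral_const_mul, integral_abs_mul_exp_neg_mul_sq hb]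
  field_simp

lemma hasDerivAt_signCorrelation (a : ℝ) :
    HasDerivAt signCorrelation (2 / π * (1 + a ^ 2)⁻¹) a := by
  have hmeas : ∀ b : ℝ, Measurable fun x => Real.sign x * centralMass (b * x) := fun b =>
    measurable_sign.mul (continuous_centralMass.comp (continuous_const_mul b)).measurable
  have hmeas' : Measurable fun x => Real.sign x * (2 * gaussianPDFReal 0 1 (a * x) * x) :=
    measurable_sign.mul (by fun_prop)
  have hbound : Integrable (fun x => |x|) (gaussianReal 0 1) :=
    ((memLp_id_gaussianReal 1).integrable le_rfl).abs
  obtain ⟨-, h⟩ := hasDerivAt_integral_of_dominated_loc_of_deriv_le (x₀ := a)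
    (F' := fun b x => Real.sign x * (2 * gaussianPDFReal 0 1 (b * x) * x))
    (bound := fun x => 2 * |x|) univ_mem
    (Eventually.of_forall fun b => (hmeas b).aestronglyMeasurable)
    ((integrable_const 1).mono' (hmeas a).aestronglyMeasurable (Eventually.of_forall fun x => by
      rw [norm_mul, Real.norm_eq_abs, Real.norm_eq_abs]
      exact mul_le_one₀ (abs_sign_le_one x) (abs_nonneg _) (abs_centralMass_le_one _)))
    hmeas'.aestronglyMeasurable
    (Eventually.of_forall fun x b _ => by
      rw [Real.norm_eq_abs, abs_mul, abs_mul, abs_mul, abs_two,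
        abs_of_nonneg (gaussianPDFReal_nonneg 0 1 _)]
      have hφ := gaussianPDFReal_nonneg 0 1 (b * x)
      calc _ ≤ 1 * (2 * 1 * |x|) := by
            gcongr
            exacts [abs_sign_le_one x, gaussianPDFReal_zero_one_le_one _]
        _ = 2 * |x| := by ring)
    (hbound.const_mul 2)
    (Eventually.of_forall fun x b _ => by
      have h := (hasDerivAt_centralMass (b * x)).comp b (hasDerivAt_mul_const x)
      simpa [mul_comm, mul_assoc] using h.const_mul (Real.sign x))
  rwa [integral_sign_mul_deriv_centralMass] at h

lemma signCorrelation_eq_arctan (a : ℝ) : signCorrelation a = 2 / π * arctan a := by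
  have hderiv : ∀ b, HasDerivAt (fun b => signCorrelation b - 2 / π * arctan b) 0 b := fun b =>
    ((hasDerivAt_signCorrelation b).sub ((hasDerivAt_arctan b).const_mul (2 / π))).congr_deriv
      (by rw [one_div, sub_self])
  have h := is_const_of_deriv_eq_zero (fun b => (hderiv b).differentiableAt)
    (fun b => (hderiv b).deriv) a 0
  simpa [signCorrelation, centralMass, sub_eq_zero] using h

lemma integral_sign_mul_sign_mul_gaussianReal (c : ℝ) :
    ∫ x, Real.sign x * Real.sign (c * x) ∂(gaussianReal 0 1) = Real.sign c := by
  have hae : (fun x => Real.sign x * Real.sign (c * x)) =ᵐ[gaussianReal 0 1]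
      fun _ => Real.sign c := by
    filter_upwards [gaussianReal_absolutelyContinuous 0 one_ne_zero
      (compl_mem_ae_iff.2 (measure_singleton 0))] with x hx
    rcases Real.sign_apply_eq_of_ne_zero x hx with h | h <;> simp [Real.sign_mul, h]
  simp [integral_congr_ae hae]

lemma dualFn_sign_of_sq_eq_one {ρ : ℝ} (hρ : ρ ^ 2 = 1) :
    dualFn Real.sign ρ = Real.sign ρ := by
  simp only [dualFn, hρ, sub_self, sqrt_zero, zero_mul, add_zero, integral_const, probReal_univ,
    one_smul]
  exact integral_sign_mul_sign_mul_gaussianReal ρ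

lemma dualFn_sign_eq_signCorrelation {ρ : ℝ} (hρ : ρ ∈ Ioo (-1 : ℝ) 1) :
    dualFn Real.sign ρ = signCorrelation (ρ / √(1 - ρ ^ 2)) := by
  have hs : 0 < √(1 - ρ ^ 2) := sqrt_pos.2 (by nlinarith [hρ.1, hρ.2])
  have hinner : ∀ x y, Real.sign (ρ * x + √(1 - ρ ^ 2) * y)
      = Real.sign (ρ / √(1 - ρ ^ 2) * x + y) := fun x y => by
    rw [show ρ * x + √(1 - ρ ^ 2) * y = √(1 - ρ ^ 2) * (ρ / √(1 - ρ ^ 2) * x + y) by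
      field_simp, Real.sign_mul, Real.sign_of_pos hs, one_mul]
  simp only [dualFn, signCorrelation, hinner, integral_const_mul, integral_sign_add_gaussianReal]

theorem dual_sign (ρ : ℝ) (hρ : ρ ∈ Set.Icc (-1 : ℝ) 1) :
    dualFn Real.sign ρ = (2 / π) * Real.arcsin ρ := by
  rcases hρ.1.eq_or_lt with rfl | hl
  · rw [dualFn_sign_of_sq_eq_one (by norm_num), Real.sign_neg, Real.sign_one, arcsin_neg_one]
    field_simp
  rcases hρ.2.eq_or_lt with rfl | hr
  · rw [dualFn_sign_of_sq_eq_one (by norm_num), Real.sign_one, arcsin_one]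
    field_simp
  rw [dualFn_sign_eq_signCorrelation ⟨hl, hr⟩, signCorrelation_eq_arctan,
    arcsin_eq_arctan ⟨hl, hr⟩]
end

section
/- The function $\arccos(1-2z)$ has the power series expansion $\arccos(1-2z) = \sum_{r \in 2\mathbb{N}+1} 2 \frac{((r-2)!!)^2}{r!} z^{r/2}$ valid for $z \in [0,1]$, where the sum is over odd integers $r \geq 1$ and $(-1)!! = 1$. -/
/-!
With `x = √z ∈ [0, 1]` one has `arccos (1 - 2 x²) = 2 arcsin x` and
`((2n-1)‼)² / (2n+1)! = C(2n, n) / (4ⁿ (2n+1))`, so the claim is twice the arcsin series at `x`.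
That series is the termwise antiderivative of the binomial series
`1 / √(1 - x²) = ∑ C(2n, n) / 4ⁿ x²ⁿ`, which proves it on `(-1, 1)`. Its coefficients are
nonnegative, so at the endpoints the limit `arcsin x → π / 2` forces both convergence and the value.
-/

open Real Nat Set Filter Topology

theorem ascPochhammer_eval_half_mul (n : ℕ) :
    (ascPochhammer ℝ n).eval (1 / 2) * 4 ^ n * n ! = (2 * n)! := by
  induction n with
  | zero => simp
  | succ n ih =>
    rw [ascPochhammer_succ_eval, show 2 * (n + 1) = 2 * n + 1 + 1 by ring,
      Nat.factorial_succ, Nat.factorial_succ, Nat.factorial_succ]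
    push_cast
    linear_combination (2 * (n : ℝ) + 1) * (2 * n + 2) * ih

theorem Nat.centralBinom_mul_factorial_mul_factorial (n : ℕ) :
    centralBinom n * n ! * n ! = (2 * n)! := by
  simpa [centralBinom_eq_two_mul_choose, two_mul] using
    Nat.choose_mul_factorial_mul_factorial (Nat.le_add_left n n)

theorem Ring.multichoose_half (n : ℕ) :
    Ring.multichoose (1 / 2 : ℝ) n = centralBinom n / 4 ^ n := by
  have h := Ring.factorial_nsmul_multichoose_eq_ascPochhammer (1 / 2 : ℝ) n
  rw [Polynomial.ascPochhammer_smeval_eq_eval, nsmul_eq_mul] at h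
  have hc : (centralBinom n * n ! * n ! : ℝ) = (2 * n)! := by
    exact_mod_cast Nat.centralBinom_mul_factorial_mul_factorial n
  have := ascPochhammer_eval_half_mul n
  rw [eq_div_iff (by positivity)]
  apply mul_right_cancel₀ (b := ((n ! : ℝ) * n !)) (by positivity)
  linear_combination (n ! : ℝ) * 4 ^ n * h + this - hc

theorem hasSum_centralBinom_div_four_pow_mul_pow {y : ℝ} (hy : |y| < 1) :
    HasSum (fun n => centralBinom n / 4 ^ n * y ^ n) (1 / √(1 - y)) := by
  have := (one_div_one_sub_rpow_hasFPowerSeriesOnBall_zero (1 / 2)).hasSum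
    (y := y) (by simpa [Metric.mem_eball, edist_dist] using hy)
  simpa only [FormalMultilinearSeries.ofScalars_apply_eq, zero_add, smul_eq_mul,
    ← Ring.multichoose_eq, Ring.multichoose_half, ← Real.sqrt_eq_rpow] using this

section OddAntiderivative

variable {a : ℕ → ℝ}

theorem summable_div_two_mul_add_one_mul_pow_two_mul_add_one (ha : ∀ n, 0 ≤ a n)
    (hs : ∀ y, 0 ≤ y → y < 1 → Summable fun n => a n * y ^ n) {x : ℝ} (hx : |x| < 1) :
    Summable fun n : ℕ => a n / (2 * n + 1) * x ^ (2 * n + 1) := by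
  refine .of_norm_bounded (hs (x ^ 2) (sq_nonneg x) (by nlinarith [sq_abs x, abs_nonneg x]))
    fun n => ?_
  have h1 : (1 : ℝ) ≤ 2 * n + 1 := by linarith [n.cast_nonneg (α := ℝ)]
  rw [norm_mul, norm_div, norm_pow, Real.norm_of_nonneg (ha n),
    Real.norm_of_nonneg (by positivity), pow_succ, pow_mul, Real.norm_eq_abs, ← sq_abs x]
  calc a n / (2 * n + 1) * ((|x| ^ 2) ^ n * |x|) ≤ a n * ((|x| ^ 2) ^ n * 1) := by
        gcongr
        exacts [ha n, _root_.div_le_self (ha n) h1]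
    _ = a n * (|x| ^ 2) ^ n := by rw [mul_one]

theorem hasDerivAt_tsum_div_two_mul_add_one_mul_pow (ha : ∀ n, 0 ≤ a n)
    (hs : ∀ y, 0 ≤ y → y < 1 → Summable fun n => a n * y ^ n) {x : ℝ} (hx : |x| < 1) :
    HasDerivAt (fun x => ∑' n : ℕ, a n / (2 * n + 1) * x ^ (2 * n + 1))
      (∑' n, a n * (x ^ 2) ^ n) x := by
  obtain ⟨r, hxr, hr1⟩ := exists_between hx
  have hr0 : 0 < r := (abs_nonneg x).trans_lt hxr
  refine hasDerivAt_tsum_of_isPreconnected (g' := fun n y => a n * (y ^ 2) ^ n)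
    (hs (r ^ 2) (sq_nonneg r) (by nlinarith)) isOpen_Ioo (convex_Ioo (-r) r).isPreconnected
    (fun n y _ => ?_) (fun n y hy => ?_) (y₀ := 0)
    ⟨neg_lt_zero.mpr hr0, hr0⟩ ?_ (abs_lt.mp hxr)
  · have h : (2 * n + 1 : ℝ) ≠ 0 := by positivity
    refine ((hasDerivAt_pow _ y).const_mul _).congr_deriv ?_
    rw [Nat.add_sub_cancel, pow_mul]
    push_cast
    field_simp
  · rw [norm_mul, Real.norm_of_nonneg (ha n), norm_pow, norm_pow, Real.norm_eq_abs]
    gcongr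
    · exact ha n
    · exact (abs_lt.mpr hy).le
  · simp

end OddAntiderivative

theorem hasSum_of_tendsto_nhdsLT_one_of_nonneg {c : ℕ → ℝ} (hc : ∀ n, 0 ≤ c n) (e : ℕ → ℕ)
    {f : ℝ → ℝ} {L : ℝ} (hf : ∀ x ∈ Ioo (0 : ℝ) 1, HasSum (fun n => c n * x ^ e n) (f x))
    (hL : Tendsto f (𝓝[<] 1) (𝓝 L)) : HasSum c L := by
  have hle : ∀ N, ∑ n ∈ Finset.range N, c n ≤ L := by
    intro N
    have hpartial : Tendsto (fun x : ℝ => ∑ n ∈ Finset.range N, c n * x ^ e n) (𝓝[<] 1)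
        (𝓝 (∑ n ∈ Finset.range N, c n)) := by
      have hcont : Continuous fun x : ℝ => ∑ n ∈ Finset.range N, c n * x ^ e n := by fun_prop
      simpa using (hcont.tendsto 1).mono_left nhdsWithin_le_nhds
    refine le_of_tendsto_of_tendsto hpartial hL ?_
    filter_upwards [Ioo_mem_nhdsLT zero_lt_one] with x hx
    exact sum_le_hasSum _ (fun n _ => mul_nonneg (hc n) (pow_nonneg hx.1.le _)) (hf x hx)
  have hsum : Summable c := summable_of_sum_range_le hc hle
  suffices L ≤ ∑' n, c n from le_antisymm (hsum.tsum_le_of_sum_range_le hle) this ▸ hsum.hasSum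
  refine le_of_tendsto hL ?_
  filter_upwards [Ioo_mem_nhdsLT zero_lt_one] with x hx
  exact hasSum_le (fun n => mul_le_of_le_one_right (hc n) (pow_le_one₀ hx.1.le hx.2.le))
    (hf x hx) hsum.hasSum

theorem hasSum_arcsin_of_abs_lt {x : ℝ} (hx : |x| < 1) :
    HasSum (fun n : ℕ => centralBinom n / 4 ^ n / (2 * n + 1) * x ^ (2 * n + 1)) (arcsin x) := by
  have ha : ∀ n : ℕ, 0 ≤ (centralBinom n : ℝ) / 4 ^ n := fun n => by positivity
  have hs : ∀ y : ℝ, 0 ≤ y → y < 1 → Summable fun n : ℕ => centralBinom n / 4 ^ n * y ^ n :=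
    fun y hy0 hy1 =>
      (hasSum_centralBinom_div_four_pow_mul_pow (abs_lt.mpr ⟨by linarith, hy1⟩)).summable
  have hderiv : ∀ w ∈ Ioo (-1 : ℝ) 1, HasDerivAt
      (fun x : ℝ => ∑' n : ℕ, (centralBinom n : ℝ) / 4 ^ n / (2 * n + 1) * x ^ (2 * n + 1))
      (1 / √(1 - w ^ 2)) w := by
    intro w hw
    have hw : |w| < 1 := abs_lt.mpr hw
    have hw2 : |w ^ 2| < 1 := by rwa [abs_pow, sq_lt_one_iff₀ (abs_nonneg w)]
    exact (hasDerivAt_tsum_div_two_mul_add_one_mul_pow ha hs hw).congr_deriv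
      (hasSum_centralBinom_div_four_pow_mul_pow hw2).tsum_eq
  have hF := isOpen_Ioo.eqOn_of_deriv_eq (convex_Ioo (-1 : ℝ) 1).isPreconnected
    (fun w hw => (hderiv w hw).differentiableAt.differentiableWithinAt)
    (differentiableOn_arcsin.mono fun w hw => by simp [hw.1.ne', hw.2.ne])
    (fun w hw => by rw [(hderiv w hw).deriv, deriv_arcsin]) (x := 0) (by norm_num) (by simp)
  exact hF (abs_lt.mp hx) ▸ (summable_div_two_mul_add_one_mul_pow_two_mul_add_one ha hs hx).hasSum

theorem hasSum_arcsin {x : ℝ} (hx : x ∈ Icc (-1 : ℝ) 1) :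
    HasSum (fun n : ℕ => centralBinom n / 4 ^ n / (2 * n + 1) * x ^ (2 * n + 1)) (arcsin x) := by
  have hone : HasSum (fun n : ℕ => (centralBinom n : ℝ) / 4 ^ n / (2 * n + 1)) (π / 2) := by
    refine hasSum_of_tendsto_nhdsLT_one_of_nonneg (fun n => by positivity) (fun n => 2 * n + 1)
      (fun x hx => hasSum_arcsin_of_abs_lt (abs_lt.mpr ⟨by linarith [hx.1], hx.2⟩)) ?_
    simpa using (continuous_arcsin.tendsto 1).mono_left nhdsWithin_le_nhds
  rcases hx.1.eq_or_lt with rfl | hx1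
  · simpa [Odd.neg_one_pow ⟨_, rfl⟩] using hone.neg
  rcases hx.2.eq_or_lt with rfl | hx2
  · simpa using hone
  exact hasSum_arcsin_of_abs_lt (abs_lt.mpr ⟨hx1, hx2⟩)

theorem Nat.doubleFactorial_two_mul_sub_one_mul (n : ℕ) :
    (2 * n - 1)‼ * (2 ^ n * n !) = (2 * n)! := by
  cases n with
  | zero => rfl
  | succ n =>
    rw [← doubleFactorial_two_mul, show 2 * (n + 1) - 1 = 2 * n + 1 by omega,
      show 2 * (n + 1) = 2 * n + 1 + 1 by ring, factorial_eq_mul_doubleFactorial, mul_comm]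

theorem Nat.doubleFactorial_two_mul_sub_one_sq_mul_four_pow (n : ℕ) :
    (2 * n - 1)‼ ^ 2 * 4 ^ n = centralBinom n * (2 * n)! := by
  apply Nat.eq_of_mul_eq_mul_right (pow_pos (factorial_pos n) 2)
  calc (2 * n - 1)‼ ^ 2 * 4 ^ n * n ! ^ 2 = ((2 * n - 1)‼ * (2 ^ n * n !)) ^ 2 := by
        rw [show 4 = 2 ^ 2 from rfl, ← pow_mul, mul_comm 2 n, pow_mul]
        ring
    _ = centralBinom n * n ! * n ! * (2 * n)! := by
        rw [doubleFactorial_two_mul_sub_one_mul, sq, centralBinom_mul_factorial_mul_factorial]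
    _ = centralBinom n * (2 * n)! * n ! ^ 2 := by ring

theorem doubleFactorial_sq_div_factorial (n : ℕ) :
    ((2 * n - 1)‼ : ℝ) ^ 2 / (2 * n + 1)! = centralBinom n / 4 ^ n / (2 * n + 1) := by
  have h : ((2 * n - 1)‼ : ℝ) ^ 2 * 4 ^ n = centralBinom n * (2 * n)! := by
    exact_mod_cast Nat.doubleFactorial_two_mul_sub_one_sq_mul_four_pow n
  rw [Nat.factorial_succ, div_div, div_eq_div_iff (by positivity) (by positivity)]
  push_cast
  linear_combination (2 * n + 1 : ℝ) * h

theorem arccos_one_sub_two_mul_sq {x : ℝ} (h0 : 0 ≤ x) (h1 : x ≤ 1) :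
    arccos (1 - 2 * x ^ 2) = 2 * arcsin x := by
  have hcos : cos (2 * arcsin x) = 1 - 2 * x ^ 2 := by
    rw [cos_two_mul, cos_sq', sin_arcsin (by linarith) h1]
    ring
  rw [← hcos, arccos_cos (by linarith [arcsin_nonneg.mpr h0])
    (by linarith [arcsin_le_pi_div_two x])]

/-- `2 * n + 1 - 2` is truncated subtraction: at `n = 0` it gives `0‼ = 1`, the convention
`(-1)‼ = 1`. -/
theorem arccos_one_sub_two_mul_series (z : ℝ) (hz : z ∈ Set.Icc (0 : ℝ) 1) :
    HasSum
      (fun n : ℕ =>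
        2 * ((Nat.doubleFactorial (2 * n + 1 - 2) : ℝ)) ^ 2 / (Nat.factorial (2 * n + 1)) *
          z ^ (((2 * n + 1 : ℕ) : ℝ) / 2))
      (Real.arccos (1 - 2 * z)) := by
  obtain ⟨hz0, hz1⟩ := hz
  have hx1 : √z ≤ 1 := sqrt_le_one.mpr hz1
  have hseries := (hasSum_arcsin ⟨by linarith [sqrt_nonneg z], hx1⟩).mul_left 2
  rw [← arccos_one_sub_two_mul_sq (sqrt_nonneg z) hx1, sq_sqrt hz0] at hseries
  refine (congrArg (HasSum · _) (funext fun n => ?_)).mpr hseries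
  rw [rpow_div_two_eq_sqrt _ hz0, rpow_natCast, show 2 * n + 1 - 2 = 2 * n - 1 by omega,
    mul_div_assoc, doubleFactorial_sq_div_factorial, mul_assoc]
end

section
/- Let $\Delta \in (0,1]$, $\zeta(z) = z - \Delta \frac{1}{\pi}(\sqrt{1-(1-2z)^2} - (1-2z)\arccos(1-2z))$ for $z \in [0,1]$. Then $\zeta$ maps $(0,1)$ into $(0,1)$, is strictly increasing where $\zeta'(z) = 1 - \Delta\frac{2}{\pi}\arccos(1-2z) > 0$, and satisfies $0 < \zeta(z) < z$ for all $z \in (0,1)$. -/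
/-!
Put `g(z) = √(1 - (1 - 2z)²) - (1 - 2z) arccos (1 - 2z)` (`zetaDefect` below), so that
`ζ(z) = z - (Δ/π) g(z)`. On `(0,1)` one has `g'(z) = 2 arccos (1 - 2z)`, which is positive and
strictly increasing, so `g` is strictly increasing and strictly convex on `[0,1]`; as `g 0 = 0`
and `g 1 = π`, this gives `0 < g z < π z`, hence `0 < ζ(z) < z`. Since
`ζ' = 1 - Δ (2/π) arccos (1 - 2z)` is antitone, the set where it is positive is an interval, on
which `ζ` is strictly increasing.
-/

open Real

/-- The squared cosine distance map. -/
noncomputable def zeta (Δ z : ℝ) : ℝ :=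
  z - Δ * (1 / π) *
    (Real.sqrt (1 - (1 - 2 * z) ^ 2) - (1 - 2 * z) * Real.arccos (1 - 2 * z))

open Set

theorem hasDerivAt_sqrt_one_sub_sq_sub_mul_arccos {u : ℝ} (hu : u ∈ Ioo (-1 : ℝ) 1) :
    HasDerivAt (fun u => √(1 - u ^ 2) - u * arccos u) (-arccos u) u := by
  have hpos : 0 < 1 - u ^ 2 := by nlinarith [hu.1, hu.2]
  have hsqrt := ((hasDerivAt_pow 2 u).const_sub 1).sqrt hpos.ne'
  have harccos := (hasDerivAt_id' u).mul (hasDerivAt_arccos hu.1.ne' hu.2.ne)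
  refine (hsqrt.sub harccos).congr_deriv ?_
  field_simp
  ring

noncomputable def zetaDefect (z : ℝ) : ℝ :=
  √(1 - (1 - 2 * z) ^ 2) - (1 - 2 * z) * arccos (1 - 2 * z)

theorem zeta_eq (Δ z : ℝ) : zeta Δ z = z - Δ * (1 / π) * zetaDefect z := rfl

theorem continuous_zetaDefect : Continuous zetaDefect := by
  unfold zetaDefect
  fun_prop

theorem zetaDefect_zero : zetaDefect 0 = 0 := by simp [zetaDefect]

theorem zetaDefect_one : zetaDefect 1 = π := by norm_num [zetaDefect]

theorem hasDerivAt_zetaDefect {z : ℝ} (hz : z ∈ Ioo (0 : ℝ) 1) :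
    HasDerivAt zetaDefect (2 * arccos (1 - 2 * z)) z := by
  have hu : 1 - 2 * z ∈ Ioo (-1 : ℝ) 1 := ⟨by linarith [hz.2], by linarith [hz.1]⟩
  refine ((hasDerivAt_sqrt_one_sub_sq_sub_mul_arccos hu).comp z
    (((hasDerivAt_id' z).const_mul 2).const_sub 1)).congr_deriv ?_
  ring

theorem deriv_zetaDefect {z : ℝ} (hz : z ∈ Ioo (0 : ℝ) 1) :
    deriv zetaDefect z = 2 * arccos (1 - 2 * z) :=
  (hasDerivAt_zetaDefect hz).deriv

theorem strictMonoOn_arccos_one_sub_two_mul :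
    StrictMonoOn (fun z => arccos (1 - 2 * z)) (Icc 0 1) := fun x hx y hy hxy =>
  strictAntiOn_arccos ⟨by linarith [hy.2], by linarith [hy.1]⟩
    ⟨by linarith [hx.2], by linarith [hx.1]⟩ (by linarith)

theorem strictMonoOn_zetaDefect : StrictMonoOn zetaDefect (Icc 0 1) := by
  refine strictMonoOn_of_deriv_pos (convex_Icc 0 1) continuous_zetaDefect.continuousOn ?_
  intro z hz
  rw [interior_Icc] at hz
  rw [deriv_zetaDefect hz]
  have : 0 < arccos (1 - 2 * z) := arccos_pos.2 (by linarith [hz.1])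
  positivity

theorem strictConvexOn_zetaDefect : StrictConvexOn ℝ (Icc 0 1) zetaDefect := by
  refine StrictMonoOn.strictConvexOn_of_deriv (convex_Icc 0 1)
    continuous_zetaDefect.continuousOn ?_
  rw [interior_Icc]
  intro x hx y hy hxy
  rw [deriv_zetaDefect hx, deriv_zetaDefect hy]
  have := strictMonoOn_arccos_one_sub_two_mul (Ioo_subset_Icc_self hx)
    (Ioo_subset_Icc_self hy) hxy
  simp only at this
  linarith

theorem zetaDefect_pos {z : ℝ} (hz : z ∈ Ioo (0 : ℝ) 1) : 0 < zetaDefect z :=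
  zetaDefect_zero ▸ strictMonoOn_zetaDefect (left_mem_Icc.2 zero_le_one)
    (Ioo_subset_Icc_self hz) hz.1

theorem zetaDefect_lt {z : ℝ} (hz : z ∈ Ioo (0 : ℝ) 1) : zetaDefect z < π * z := by
  have := strictConvexOn_zetaDefect.2 (left_mem_Icc.2 zero_le_one)
    (right_mem_Icc.2 zero_le_one) zero_ne_one (sub_pos.2 hz.2) hz.1 (by ring)
  simpa [zetaDefect_zero, zetaDefect_one, mul_comm] using this

theorem hasDerivAt_zeta (Δ : ℝ) {z : ℝ} (hz : z ∈ Ioo (0 : ℝ) 1) :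
    HasDerivAt (zeta Δ) (1 - Δ * (2 / π) * arccos (1 - 2 * z)) z := by
  refine ((hasDerivAt_id' z).sub
    ((hasDerivAt_zetaDefect hz).const_mul (Δ * (1 / π)))).congr_deriv ?_
  ring

theorem continuous_zeta (Δ : ℝ) : Continuous (zeta Δ) :=
  continuous_id.sub (continuous_const.mul continuous_zetaDefect)

theorem zeta_pos {Δ z : ℝ} (hΔ : Δ ≤ 1) (hz : z ∈ Ioo (0 : ℝ) 1) : 0 < zeta Δ z := by
  have hD := (zetaDefect_pos hz).le
  rw [zeta_eq, sub_pos]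
  calc Δ * (1 / π) * zetaDefect z ≤ 1 * (1 / π) * zetaDefect z := by gcongr
    _ < z := by
      rw [one_mul, one_div_mul_eq_div, div_lt_iff₀ pi_pos, mul_comm]
      exact zetaDefect_lt hz

theorem zeta_lt_self {Δ z : ℝ} (hΔ : 0 < Δ) (hz : z ∈ Ioo (0 : ℝ) 1) : zeta Δ z < z := by
  have := zetaDefect_pos hz
  rw [zeta_eq]
  have : 0 < Δ * (1 / π) * zetaDefect z := by positivity
  linarith

theorem strictMonoOn_zeta {Δ : ℝ} (hΔ : 0 ≤ Δ) :
    StrictMonoOn (zeta Δ)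
      {z ∈ Icc (0 : ℝ) 1 | 0 < 1 - Δ * (2 / π) * arccos (1 - 2 * z)} := by
  have hanti : Antitone fun z => 1 - Δ * (2 / π) * arccos (1 - 2 * z) := fun x y hxy =>
    sub_le_sub_left (mul_le_mul_of_nonneg_left (antitone_arccos (by linarith))
      (by positivity)) 1
  refine strictMonoOn_of_deriv_pos ((hanti.antitoneOn _).convex_gt (convex_Icc 0 1) 0)
    (continuous_zeta Δ).continuousOn fun z hz => ?_
  have hz' : z ∈ Ioo (0 : ℝ) 1 := by
    simpa only [interior_Icc] using interior_mono (sep_subset _ _) hz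
  rw [(hasDerivAt_zeta Δ hz').deriv]
  exact (interior_subset hz).2

/-- `ζ` maps `(0,1)` into `(0,1)`, satisfies `0 < ζ(z) < z` there, and is strictly
increasing on the set where `ζ'(z) = 1 - Δ(2/π) arccos(1-2z) > 0`. -/
theorem zeta_properties (Δ : ℝ) (hΔ : Δ ∈ Set.Ioc (0 : ℝ) 1) :
    (∀ z ∈ Set.Ioo (0 : ℝ) 1, zeta Δ z ∈ Set.Ioo (0 : ℝ) 1) ∧
    StrictMonoOn (zeta Δ)
      {z | z ∈ Set.Icc (0 : ℝ) 1 ∧ 0 < 1 - Δ * (2 / π) * Real.arccos (1 - 2 * z)} ∧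
    (∀ z ∈ Set.Ioo (0 : ℝ) 1, 0 < zeta Δ z ∧ zeta Δ z < z) :=
  ⟨fun _ hz => ⟨zeta_pos hΔ.2 hz, (zeta_lt_self hΔ.1 hz).trans hz.2⟩,
    strictMonoOn_zeta hΔ.1.le, fun _ hz => ⟨zeta_pos hΔ.2 hz, zeta_lt_self hΔ.1 hz⟩⟩
end

section
/- Let $\Delta \in (0,1]$, $w > 1$, and let $\omega$ be the inverse cosine distance map. Denote by $\omega^{\circ k}$ the $k$-fold iterate. Then there exists a constant $C > 0$ (depending on $w$ and $\Delta$) such that for all $k \geq 1$: $|\omega^{\circ k}(w) - (w + \Delta\frac{4}{3\pi}(k-1) + \Delta\frac{2}{\pi}\log(\Delta^{-1}\frac{3\pi}{4}w + k - 1))| \leq C$. -/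
open Real

/-- The inverse cosine distance map `ω(w) = ζ(w⁻²)^{-1/2}`. -/
noncomputable def omegaMap (Δ w : ℝ) : ℝ := (Real.sqrt (zeta Δ ((w ^ 2)⁻¹)))⁻¹

/-!
Put `z = w⁻² = sin²(θ/2)`. Then `ζ(z) = z - (Δ/π) (sin θ - θ cos θ)`, and comparing
derivatives gives `sin θ - θ cos θ = (8/3) sin³(θ/2) + O(θ⁵)`, so with `a = Δ 4/(3π)`,
`v² ζ(v⁻²) = 1 - 2a/v + O(v⁻³)`. Expanding `(1 - u)^{-1/2}` gives the one-step law
`v + a + (3/2) a²/v ≤ ω(v) ≤ v + a + (3/2) a²/v + O(v⁻²)`, the lower one for all `v > 1`.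

Hence the orbit grows at least like `a (s + k)` with `s = w/a`, and the defect
`d_k = x_k - a (s + k) - (3a/2) log (s + k)` has increments bounded above by a telescoping
`O(1/n²)`. Once `d` is bounded above, `x_k ≤ a n + O(log n)` bounds the increments below by a
telescoping `O(log n / n²)`. So `d` is bounded, and the profile of the theorem differs from
`a (s + k) + (3a/2) log (s + k)` by a bounded amount.
-/

open Set

section Calculus

variable {f f' : ℝ → ℝ} {a b : ℝ}

lemma monotoneOn_Icc_of_hasDerivAt (hf : ∀ y, HasDerivAt f (f' y) y)
    (hf' : ∀ y ∈ Ioo a b, 0 ≤ f' y) : MonotoneOn f (Icc a b) :=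
  monotoneOn_of_hasDerivWithinAt_nonneg (convex_Icc a b)
    (fun y _ => (hf y).continuousAt.continuousWithinAt) (fun y _ => (hf y).hasDerivWithinAt)
    (by rwa [interior_Icc])

lemma strictMonoOn_Icc_of_hasDerivAt (hf : ∀ y, HasDerivAt f (f' y) y)
    (hf' : ∀ y ∈ Ioo a b, 0 < f' y) : StrictMonoOn f (Icc a b) :=
  strictMonoOn_of_hasDerivWithinAt_pos (convex_Icc a b)
    (fun y _ => (hf y).continuousAt.continuousWithinAt) (fun y _ => (hf y).hasDerivWithinAt)
    (by rwa [interior_Icc])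

end Calculus

section Trigonometry

lemma hasDerivAt_sin_sub_mul_cos_sub_sin_half_pow (y : ℝ) :
    HasDerivAt (fun t => sin t - t * cos t - 8 / 3 * sin (t / 2) ^ 3)
      (sin y * (y - 2 * sin (y / 2))) y := by
  have hhalf : HasDerivAt (fun t => sin (t / 2)) (cos (y / 2) * (1 / 2)) y :=
    ((hasDerivAt_id' y).div_const 2).sin
  have hsin : sin y = 2 * sin (y / 2) * cos (y / 2) := by
    rw [← sin_two_mul, mul_div_cancel₀ _ two_ne_zero]
  refine (((hasDerivAt_sin y).sub ((hasDerivAt_id' y).mul (hasDerivAt_cos y))).sub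
    ((hhalf.pow 3).const_mul (8 / 3))).congr_deriv ?_
  rw [hsin]
  push_cast
  ring

lemma le_sin_sub_mul_cos {θ : ℝ} (h0 : 0 ≤ θ) (hπ : θ ≤ π) :
    8 / 3 * sin (θ / 2) ^ 3 ≤ sin θ - θ * cos θ := by
  have hmono := monotoneOn_Icc_of_hasDerivAt hasDerivAt_sin_sub_mul_cos_sub_sin_half_pow
    fun y ⟨hy0, hyπ⟩ => mul_nonneg (sin_nonneg_of_nonneg_of_le_pi hy0.le hyπ.le)
      (by linarith [sin_le (x := y / 2) (by linarith)])
  have := hmono (left_mem_Icc.2 (h0.trans hπ)) ⟨h0, hπ⟩ h0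
  norm_num at this
  linarith

lemma sin_sub_mul_cos_le {θ : ℝ} (h0 : 0 ≤ θ) :
    sin θ - θ * cos θ ≤ 8 / 3 * sin (θ / 2) ^ 3 + θ ^ 5 / 120 := by
  have hderiv (y : ℝ) : HasDerivAt
      (fun t => t ^ 5 / 120 - (sin t - t * cos t - 8 / 3 * sin (t / 2) ^ 3))
      (y ^ 4 / 24 - sin y * (y - 2 * sin (y / 2))) y := by
    refine (((hasDerivAt_pow 5 y).div_const 120).sub
      (hasDerivAt_sin_sub_mul_cos_sub_sin_half_pow y)).congr_deriv ?_
    push_cast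
    ring
  have hmono := monotoneOn_Icc_of_hasDerivAt hderiv (a := 0) (b := θ) fun y ⟨hy0, _⟩ => by
    -- `sin y ≤ y` and `0 ≤ y - 2 sin (y / 2) ≤ y³ / 24`
    have hcube := sin_ge_sub_cube (x := y / 2) (by linarith)
    have hhalf := sin_le (x := y / 2) (by linarith)
    rcases le_total 0 (sin y) with hs | hs
    · nlinarith [sin_le hy0.le, mul_le_mul (sin_le hy0.le)
        (show y - 2 * sin (y / 2) ≤ y ^ 3 / 24 by linarith) (by linarith) hy0.le]
    · nlinarith [pow_nonneg hy0.le 4]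
  have := hmono (left_mem_Icc.2 h0) (right_mem_Icc.2 h0) h0
  norm_num at this
  linarith

lemma sin_sub_mul_cos_lt {θ : ℝ} (h0 : 0 < θ) (hπ : θ < π) :
    sin θ - θ * cos θ < π * (1 - cos θ) / 2 := by
  set p : ℝ → ℝ := fun t => π * (1 - cos t) / 2 - (sin t - t * cos t)
  have hderiv (y : ℝ) : HasDerivAt p (sin y * (π / 2 - y)) y := by
    refine (((((hasDerivAt_cos y).const_sub 1).const_mul π).div_const 2).sub
      ((hasDerivAt_sin y).sub ((hasDerivAt_id' y).mul (hasDerivAt_cos y)))).congr_deriv ?_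
    ring
  suffices 0 < p θ by simp only [p] at this; linarith
  simp only [p]
  -- `p` vanishes at `0` and `π`, increases up to `π / 2` and decreases afterwards
  rcases le_or_gt θ (π / 2) with hle | hgt
  · have hmono := strictMonoOn_Icc_of_hasDerivAt hderiv (a := 0) (b := π / 2)
      fun y ⟨hy0, hy⟩ => mul_pos (sin_pos_of_pos_of_lt_pi hy0 (by linarith)) (by linarith)
    simpa [p] using hmono (left_mem_Icc.2 (by positivity)) ⟨h0.le, hle⟩ h0
  · have hmono := strictMonoOn_Icc_of_hasDerivAt (fun y => (hderiv y).neg) (a := π / 2) (b := π)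
      fun y ⟨hy, hyπ⟩ => by
        nlinarith [sin_pos_of_pos_of_lt_pi (x := y) (by linarith) hyπ]
    have := hmono ⟨hgt.le, hπ.le⟩ (right_mem_Icc.2 (by linarith)) hπ
    simp only [Pi.neg_apply, p, cos_pi, sin_pi] at this
    linarith

end Trigonometry

section Zeta

variable {Δ z : ℝ}

lemma sin_half_arccos_one_sub_two_mul (h0 : 0 ≤ z) (h1 : z ≤ 1) :
    sin (arccos (1 - 2 * z) / 2) = √z := by
  rw [sin_half_eq_sqrt (arccos_nonneg _) (by linarith [arccos_le_pi (1 - 2 * z), pi_pos]),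
    cos_arccos (by linarith) (by linarith)]
  ring_nf

lemma zeta_eq_sub_sin_sub_mul_cos (h0 : 0 ≤ z) (h1 : z ≤ 1) :
    zeta Δ z = z - Δ / π *
      (sin (arccos (1 - 2 * z)) - arccos (1 - 2 * z) * cos (arccos (1 - 2 * z))) := by
  rw [zeta, sin_arccos, cos_arccos (by linarith) (by linarith)]
  ring

lemma zeta_le (hΔ : 0 ≤ Δ) (h0 : 0 ≤ z) (h1 : z ≤ 1) :
    zeta Δ z ≤ z - Δ * (8 / (3 * π)) * (z * √z) := by
  have hθ := le_sin_sub_mul_cos (arccos_nonneg (1 - 2 * z)) (arccos_le_pi _)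
  rw [sin_half_arccos_one_sub_two_mul h0 h1] at hθ
  rw [zeta_eq_sub_sin_sub_mul_cos h0 h1]
  have hz : √z ^ 3 = z * √z := by rw [pow_succ, sq_sqrt h0]
  have := mul_le_mul_of_nonneg_left hθ (div_nonneg hΔ pi_pos.le)
  rw [hz] at this
  have e : Δ * (8 / (3 * π)) * (z * √z) = Δ / π * (8 / 3 * (z * √z)) := by ring
  linarith

lemma le_zeta (hΔ : 0 ≤ Δ) (h0 : 0 ≤ z) (h1 : z ≤ 1) :
    z - Δ * (8 / (3 * π)) * (z * √z) - Δ * (π ^ 4 / 120) * (z ^ 2 * √z) ≤ zeta Δ z := by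
  set θ := arccos (1 - 2 * z)
  have hhalf := sin_half_arccos_one_sub_two_mul h0 h1
  have hθ := sin_sub_mul_cos_le (arccos_nonneg (1 - 2 * z))
  rw [hhalf] at hθ
  -- Jordan's inequality at `θ / 2` gives `θ ≤ π √z`
  have hθle : θ ≤ π * √z := by
    have := mul_le_sin (x := θ / 2) (by linarith [arccos_nonneg (1 - 2 * z)])
      (by linarith [arccos_le_pi (1 - 2 * z)])
    rw [hhalf, show 2 / π * (θ / 2) = θ / π by ring, div_le_iff₀ pi_pos] at this
    linarith
  have hθ5 : θ ^ 5 ≤ π ^ 5 * (z ^ 2 * √z) := by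
    calc θ ^ 5 ≤ (π * √z) ^ 5 := pow_le_pow_left₀ (arccos_nonneg _) hθle 5
      _ = π ^ 5 * (√z ^ 2) ^ 2 * √z := by ring
      _ = π ^ 5 * (z ^ 2 * √z) := by rw [sq_sqrt h0]; ring
  have hz : √z ^ 3 = z * √z := by rw [pow_succ, sq_sqrt h0]
  rw [hz] at hθ
  rw [zeta_eq_sub_sin_sub_mul_cos h0 h1]
  have hG : sin θ - θ * cos θ ≤ 8 / 3 * (z * √z) + π ^ 5 * (z ^ 2 * √z) / 120 := by
    linarith
  have := mul_le_mul_of_nonneg_left hG (div_nonneg hΔ pi_pos.le)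
  have e : Δ / π * (8 / 3 * (z * √z) + π ^ 5 * (z ^ 2 * √z) / 120)
      = Δ * (8 / (3 * π)) * (z * √z) + Δ * (π ^ 4 / 120) * (z ^ 2 * √z) := by
    field_simp
  linarith

lemma zeta_pos_s13 (hΔ0 : 0 ≤ Δ) (hΔ1 : Δ ≤ 1) (h0 : 0 < z) (h1 : z < 1) : 0 < zeta Δ z := by
  set θ := arccos (1 - 2 * z)
  have hθ : sin θ - θ * cos θ < π * z := by
    have := sin_sub_mul_cos_lt (θ := θ) (arccos_pos.2 (by linarith)) (arccos_lt_pi.2 (by linarith))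
    rw [cos_arccos (x := 1 - 2 * z) (by linarith) (by linarith)] at this ⊢
    linarith
  rw [zeta_eq_sub_sin_sub_mul_cos h0.le h1.le]
  set G := sin θ - θ * cos θ
  have hG : G / π < z := by rw [div_lt_iff₀ pi_pos]; linarith
  -- `ζ(z)` is a convex combination of `z` and `z - G/π`, both positive
  have e : z - Δ / π * G = (1 - Δ) * z + Δ * (z - G / π) := by ring
  rw [e]
  rcases hΔ0.eq_or_lt with rfl | hΔ
  · simpa using h0
  · nlinarith [mul_pos hΔ (sub_pos.2 hG)]

end Zeta

section InverseSqrt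

variable {u : ℝ}

lemma le_inv_sqrt_one_sub {P : ℝ} (hP : 0 ≤ P) (hu : u < 1) (h : P ^ 2 * (1 - u) ≤ 1) :
    P ≤ (√(1 - u))⁻¹ := by
  rw [← sqrt_inv, le_sqrt hP (inv_nonneg.2 (by linarith)), inv_eq_one_div,
    le_div_iff₀ (by linarith)]
  exact h

lemma inv_sqrt_one_sub_le {Q : ℝ} (hQ : 0 ≤ Q) (hu : u < 1) (h : 1 ≤ Q ^ 2 * (1 - u)) :
    (√(1 - u))⁻¹ ≤ Q := by
  rw [← sqrt_inv, sqrt_le_iff, inv_eq_one_div, div_le_iff₀ (by linarith)]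
  exact ⟨hQ, h⟩

lemma one_add_le_inv_sqrt_one_sub (h0 : 0 ≤ u) (h1 : u < 1) :
    1 + u / 2 + 3 * u ^ 2 / 8 ≤ (√(1 - u))⁻¹ :=
  le_inv_sqrt_one_sub (by positivity) h1
    (by nlinarith [pow_nonneg h0 3, pow_nonneg h0 4, pow_nonneg h0 5])

lemma inv_sqrt_one_sub_le_one_add (h0 : 0 ≤ u) (h1 : u ≤ 1 / 2) :
    (√(1 - u))⁻¹ ≤ 1 + u / 2 + 3 * u ^ 2 / 8 + u ^ 3 := by
  refine inv_sqrt_one_sub_le (by positivity) (by linarith) ?_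
  have hg : 0 ≤ 11/8 - 79/64 * u - 25/64 * u^2 + u^3/4 - u^4 := by
    nlinarith [sq_nonneg u, mul_nonneg h0 h0, pow_nonneg h0 3, pow_nonneg h0 4,
      mul_nonneg (mul_nonneg h0 h0) h0, sq_nonneg (u - 1/2)]
  nlinarith [mul_nonneg (pow_nonneg h0 3) hg]

end InverseSqrt

section Omega

variable {Δ v : ℝ}

lemma mul_four_div_three_mul_pi_le (hΔ0 : 0 ≤ Δ) (hΔ1 : Δ ≤ 1) :
    Δ * (4 / (3 * π)) ≤ 1 / 2 := by
  have : 4 / (3 * π) ≤ 1 / 2 := by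
    rw [div_le_div_iff₀ (by positivity) two_pos]; linarith [pi_gt_three]
  nlinarith [show (0 : ℝ) ≤ 4 / (3 * π) by positivity]

lemma mul_pi_pow_four_div_le (hΔ0 : 0 ≤ Δ) (hΔ1 : Δ ≤ 1) : Δ * (π ^ 4 / 120) ≤ 1 := by
  have : π ^ 4 ≤ 120 := by
    have h := pi_lt_d2
    calc π ^ 4 ≤ 3.15 ^ 4 := pow_le_pow_left₀ pi_pos.le h.le 4
      _ ≤ 120 := by norm_num
  nlinarith [show (0 : ℝ) ≤ π ^ 4 / 120 by positivity]

lemma omegaMap_eq_mul (hv : 0 < v) :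
    omegaMap Δ v = v * (√(v ^ 2 * zeta Δ (v ^ 2)⁻¹))⁻¹ := by
  rw [omegaMap, sqrt_mul (sq_nonneg v), sqrt_sq hv.le, mul_inv, ← mul_assoc,
    mul_inv_cancel₀ hv.ne', one_mul]

lemma sq_mul_zeta_inv_sq_le (hΔ : 0 ≤ Δ) (hv : 1 ≤ v) :
    v ^ 2 * zeta Δ (v ^ 2)⁻¹ ≤ 1 - 2 * (Δ * (4 / (3 * π))) / v := by
  have hv0 : 0 < v := by linarith
  have h := zeta_le hΔ (z := (v ^ 2)⁻¹) (by positivity) (inv_le_one_of_one_le₀ (by nlinarith))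
  rw [sqrt_inv, sqrt_sq hv0.le] at h
  calc v ^ 2 * zeta Δ (v ^ 2)⁻¹
      ≤ v ^ 2 * ((v ^ 2)⁻¹ - Δ * (8 / (3 * π)) * ((v ^ 2)⁻¹ * v⁻¹)) :=
        mul_le_mul_of_nonneg_left h (by positivity)
    _ = 1 - 2 * (Δ * (4 / (3 * π))) / v := by field_simp; ring

lemma le_sq_mul_zeta_inv_sq (hΔ : 0 ≤ Δ) (hv : 1 ≤ v) :
    1 - 2 * (Δ * (4 / (3 * π))) / v - Δ * (π ^ 4 / 120) / v ^ 3 ≤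
      v ^ 2 * zeta Δ (v ^ 2)⁻¹ := by
  have hv0 : 0 < v := by linarith
  have h := le_zeta hΔ (z := (v ^ 2)⁻¹) (by positivity) (inv_le_one_of_one_le₀ (by nlinarith))
  rw [sqrt_inv, sqrt_sq hv0.le] at h
  calc 1 - 2 * (Δ * (4 / (3 * π))) / v - Δ * (π ^ 4 / 120) / v ^ 3
      = v ^ 2 * ((v ^ 2)⁻¹ - Δ * (8 / (3 * π)) * ((v ^ 2)⁻¹ * v⁻¹)
          - Δ * (π ^ 4 / 120) * ((v ^ 2)⁻¹ ^ 2 * v⁻¹)) := by field_simp; ring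
    _ ≤ v ^ 2 * zeta Δ (v ^ 2)⁻¹ := mul_le_mul_of_nonneg_left h (by positivity)

lemma add_le_omegaMap (hΔ0 : 0 ≤ Δ) (hΔ1 : Δ ≤ 1) (hv : 1 < v) :
    v + Δ * (4 / (3 * π)) + 3 / 2 * (Δ * (4 / (3 * π))) ^ 2 / v ≤ omegaMap Δ v := by
  set a := Δ * (4 / (3 * π))
  have hv0 : 0 < v := by linarith
  have ha0 : 0 ≤ a := by positivity
  have hu1 : 2 * a / v < 1 := by
    rw [div_lt_one hv0]; linarith [mul_four_div_three_mul_pi_le hΔ0 hΔ1]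
  have hζ : 0 < v ^ 2 * zeta Δ (v ^ 2)⁻¹ := mul_pos (by positivity)
    (zeta_pos_s13 hΔ0 hΔ1 (by positivity) (inv_lt_one_of_one_lt₀ (by nlinarith)))
  calc v + a + 3 / 2 * a ^ 2 / v
      = v * (1 + 2 * a / v / 2 + 3 * (2 * a / v) ^ 2 / 8) := by field_simp; ring
    _ ≤ v * (√(1 - 2 * a / v))⁻¹ := mul_le_mul_of_nonneg_left
        (one_add_le_inv_sqrt_one_sub (by positivity) hu1) hv0.le
    _ ≤ v * (√(v ^ 2 * zeta Δ (v ^ 2)⁻¹))⁻¹ := mul_le_mul_of_nonneg_left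
        (inv_anti₀ (sqrt_pos.2 hζ) (sqrt_le_sqrt (sq_mul_zeta_inv_sq_le hΔ0 hv.le))) hv0.le
    _ = omegaMap Δ v := (omegaMap_eq_mul hv0).symm

lemma two_mul_mul_add_mul_pow_le {a E t : ℝ} (ha : a ≤ 1 / 2) (hE : E ≤ 1) (ht0 : 0 ≤ t)
    (ht : t ≤ 1) : 2 * a * t + E * t ^ 3 ≤ 2 * t := by
  have h1 : 2 * a * t ≤ t := by nlinarith
  have h2 : E * t ^ 3 ≤ t := by
    nlinarith [mul_le_mul_of_nonneg_right hE (pow_nonneg ht0 3), pow_le_pow_of_le_one ht0 ht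
      (show 1 ≤ 3 by norm_num)]
  linarith

-- the cubic upper expansion of `(1 - u)^{-1/2}` at `u = 2at + Et³`, where `t = 1/v`
lemma inv_sqrt_expansion_le {a E t : ℝ} (ha0 : 0 ≤ a) (ha : a ≤ 1 / 2) (hE0 : 0 ≤ E)
    (hE : E ≤ 1) (ht0 : 0 ≤ t) (ht : t ≤ 1 / 4) :
    1 + (2 * a * t + E * t ^ 3) / 2 + 3 * (2 * a * t + E * t ^ 3) ^ 2 / 8
      + (2 * a * t + E * t ^ 3) ^ 3 ≤ 1 + a * t + 3 / 2 * a ^ 2 * t ^ 2 + 10 * t ^ 3 := by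
  have ht3 : 0 ≤ t ^ 3 := pow_nonneg ht0 3
  have hu3 : (2 * a * t + E * t ^ 3) ^ 3 ≤ 8 * t ^ 3 := by
    calc (2 * a * t + E * t ^ 3) ^ 3 ≤ (2 * t) ^ 3 :=
          pow_le_pow_left₀ (by positivity) (two_mul_mul_add_mul_pow_le ha hE ht0 (by linarith)) 3
      _ = 8 * t ^ 3 := by ring
  have h1 : E * t ^ 3 ≤ t ^ 3 := by nlinarith
  have h2 : a * E * t ^ 4 ≤ t ^ 3 / 8 := by
    have haE : a * E ≤ 1 / 2 := by nlinarith
    have ht4 : t ^ 4 ≤ t ^ 3 / 4 := by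
      rw [pow_succ]; nlinarith
    nlinarith [mul_nonneg ha0 hE0, pow_nonneg ht0 4]
  have h3 : E ^ 2 * t ^ 6 ≤ t ^ 3 := by
    have : E ^ 2 ≤ 1 := by nlinarith
    have : t ^ 6 ≤ t ^ 3 := pow_le_pow_of_le_one ht0 (by linarith) (by norm_num)
    nlinarith [sq_nonneg E, pow_nonneg ht0 6]
  have expand : 1 + (2 * a * t + E * t ^ 3) / 2 + 3 * (2 * a * t + E * t ^ 3) ^ 2 / 8
      + (2 * a * t + E * t ^ 3) ^ 3 = 1 + a * t + 3 / 2 * a ^ 2 * t ^ 2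
        + (E * t ^ 3 / 2 + 3 / 2 * (a * E * t ^ 4) + 3 / 8 * (E ^ 2 * t ^ 6))
        + (2 * a * t + E * t ^ 3) ^ 3 := by ring
  linarith

lemma omegaMap_le (hΔ0 : 0 ≤ Δ) (hΔ1 : Δ ≤ 1) (hv : 4 ≤ v) :
    omegaMap Δ v ≤
      v + Δ * (4 / (3 * π)) + 3 / 2 * (Δ * (4 / (3 * π))) ^ 2 / v + 10 / v ^ 2 := by
  set a := Δ * (4 / (3 * π))
  set E := Δ * (π ^ 4 / 120)
  set t := v⁻¹
  have hv0 : 0 < v := by linarith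
  have ha : a ≤ 1 / 2 := mul_four_div_three_mul_pi_le hΔ0 hΔ1
  have hE : E ≤ 1 := mul_pi_pow_four_div_le hΔ0 hΔ1
  have ht0 : 0 ≤ t := by positivity
  have ht : t ≤ 1 / 4 := by rw [inv_le_comm₀ hv0 (by norm_num)]; linarith
  have hu : 2 * a / v + E / v ^ 3 = 2 * a * t + E * t ^ 3 := by simp only [t]; field_simp
  have hu2 : 2 * a * t + E * t ^ 3 ≤ 1 / 2 := by
    linarith [two_mul_mul_add_mul_pow_le ha hE ht0 (by linarith)]
  have hlow := le_sq_mul_zeta_inv_sq hΔ0 (by linarith : 1 ≤ v)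
  rw [sub_sub, hu] at hlow
  calc omegaMap Δ v = v * (√(v ^ 2 * zeta Δ (v ^ 2)⁻¹))⁻¹ := omegaMap_eq_mul hv0
    _ ≤ v * (√(1 - (2 * a * t + E * t ^ 3)))⁻¹ := mul_le_mul_of_nonneg_left
        (inv_anti₀ (sqrt_pos.2 (by linarith)) (sqrt_le_sqrt hlow)) hv0.le
    _ ≤ v * (1 + a * t + 3 / 2 * a ^ 2 * t ^ 2 + 10 * t ^ 3) := mul_le_mul_of_nonneg_left
        ((inv_sqrt_one_sub_le_one_add (by positivity) hu2).trans
          (inv_sqrt_expansion_le (by positivity) ha (by positivity) hE ht0 ht)) hv0.le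
    _ = v + a + 3 / 2 * a ^ 2 / v + 10 / v ^ 2 := by simp only [t]; field_simp

end Omega

section Recurrence

lemma log_add_one_sub_log_le {n : ℝ} (hn : 0 < n) : log (n + 1) - log n ≤ 1 / n := by
  rw [← log_div (by linarith) hn.ne']
  calc log ((n + 1) / n) ≤ (n + 1) / n - 1 := log_le_sub_one_of_pos (by positivity)
    _ = 1 / n := by field_simp; ring

lemma inv_add_one_le_log_add_one_sub_log {n : ℝ} (hn : 0 < n) :
    1 / (n + 1) ≤ log (n + 1) - log n := by
  rw [← log_div (by linarith) hn.ne']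
  calc 1 / (n + 1) = 1 - ((n + 1) / n)⁻¹ := by field_simp; ring
    _ ≤ log ((n + 1) / n) := one_sub_inv_le_log_of_pos (by positivity)

lemma one_div_sq_le {n : ℝ} (hn : 1 ≤ n) : 1 / n ^ 2 ≤ 2 * (1 / n - 1 / (n + 1)) := by
  have hn0 : 0 < n := by linarith
  rw [div_sub_div _ _ hn0.ne' (by linarith), div_le_iff₀ (by positivity)]
  field_simp
  nlinarith

lemma log_div_sq_le {n : ℝ} (hn : 1 ≤ n) :
    log n / n ^ 2 ≤ 2 * ((1 + log n) / n - (1 + log (n + 1)) / (n + 1)) := by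
  have hn0 : 0 < n := by linarith
  have hlog0 : 0 ≤ log n := log_nonneg hn
  have hinc : n * (log (n + 1) - log n) ≤ 1 := by
    have := mul_le_mul_of_nonneg_left (log_add_one_sub_log_le hn0) hn0.le
    rwa [mul_one_div_cancel hn0.ne'] at this
  have e : (1 + log n) / n - (1 + log (n + 1)) / (n + 1)
      = (1 + log n - n * (log (n + 1) - log n)) / (n * (n + 1)) := by
    field_simp; ring
  have h1 : log n / n ^ 2 ≤ 2 * (log n / (n * (n + 1))) := by
    rw [mul_div_assoc', div_le_div_iff₀ (by positivity) (by positivity)]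
    nlinarith [mul_nonneg hlog0 (mul_nonneg hn0.le (by linarith : (0 : ℝ) ≤ n - 1))]
  have h2 : log n / (n * (n + 1)) ≤ (1 + log n - n * (log (n + 1) - log n)) / (n * (n + 1)) :=
    div_le_div_of_nonneg_right (by linarith) (by positivity)
  rw [e]
  linarith

noncomputable def defect (a n x : ℝ) : ℝ := x - (a * n + 3 * a / 2 * log n)

lemma defect_succ_sub_le {a n x x' B : ℝ} (ha : 0 < a) (hB : 0 ≤ B) (hn : 1 ≤ n)
    (hx : a * n ≤ x) (hx' : x' ≤ x + a + 3 / 2 * a ^ 2 / x + B / x ^ 2) :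
    defect a (n + 1) x' - defect a n x ≤
      (3 * a / 2 + 2 * B / a ^ 2) * (1 / n - 1 / (n + 1)) := by
  have hn0 : 0 < n := by linarith
  have han : 0 < a * n := by positivity
  have hlog := inv_add_one_le_log_add_one_sub_log hn0
  have h1 : 3 / 2 * a ^ 2 / x ≤ 3 * a / 2 * (1 / n) := by
    calc 3 / 2 * a ^ 2 / x ≤ 3 / 2 * a ^ 2 / (a * n) :=
          div_le_div_of_nonneg_left (by positivity) han hx
      _ = 3 * a / 2 * (1 / n) := by field_simp
  have h2 : B / x ^ 2 ≤ 2 * B / a ^ 2 * (1 / n - 1 / (n + 1)) := by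
    calc B / x ^ 2 ≤ B / (a * n) ^ 2 :=
          div_le_div_of_nonneg_left hB (by positivity) (pow_le_pow_left₀ han.le hx 2)
      _ = B / a ^ 2 * (1 / n ^ 2) := by field_simp
      _ ≤ B / a ^ 2 * (2 * (1 / n - 1 / (n + 1))) :=
          mul_le_mul_of_nonneg_left (one_div_sq_le hn) (by positivity)
      _ = 2 * B / a ^ 2 * (1 / n - 1 / (n + 1)) := by ring
  have h3 := mul_le_mul_of_nonneg_left hlog (by positivity : (0 : ℝ) ≤ 3 * a / 2)
  simp only [defect]
  nlinarith

lemma sub_le_defect_succ_sub {a n x x' C : ℝ} (ha : 0 < a) (hC : 0 ≤ C) (hn : 1 ≤ n)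
    (hx : a * n ≤ x) (hxC : defect a n x ≤ C) (hx' : x + a + 3 / 2 * a ^ 2 / x ≤ x') :
    -(9 * a / 2 * ((1 + log n) / n - (1 + log (n + 1)) / (n + 1))
        + 3 * C * (1 / n - 1 / (n + 1))) ≤ defect a (n + 1) x' - defect a n x := by
  have hn0 : 0 < n := by linarith
  have han : 0 < a * n := by positivity
  have hlog := mul_le_mul_of_nonneg_left (log_add_one_sub_log_le hn0)
    (by positivity : (0 : ℝ) ≤ 3 * a / 2)
  -- the excess of `x` over `a n` is at most `(3a/2) log n + C`, so `3a²/(2x)` misses `3a/(2n)`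
  -- by `O(log n / n²)`, which telescopes
  have hexcess : 3 * a / 2 * (1 / n) - 3 / 2 * a ^ 2 / x ≤ 3 / 2 * (x - a * n) / n ^ 2 := by
    have hx0 : x ≠ 0 := by linarith
    have e : 3 * a / 2 * (1 / n) - 3 / 2 * a ^ 2 / x = 3 / 2 * (x - a * n) / n * (a / x) := by
      field_simp
    rw [e]
    calc 3 / 2 * (x - a * n) / n * (a / x) ≤ 3 / 2 * (x - a * n) / n * (1 / n) := by
          refine mul_le_mul_of_nonneg_left ?_ (div_nonneg (by linarith) hn0.le)
          rw [div_le_div_iff₀ (by linarith) hn0]; linarith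
      _ = 3 / 2 * (x - a * n) / n ^ 2 := by ring
  have hlogn := mul_le_mul_of_nonneg_left (log_div_sq_le hn)
    (by positivity : (0 : ℝ) ≤ 9 * a / 4)
  have hinv := mul_le_mul_of_nonneg_left (one_div_sq_le hn)
    (by positivity : (0 : ℝ) ≤ 3 / 2 * C)
  have hsplit : 3 / 2 * (x - a * n) / n ^ 2
      ≤ 9 * a / 4 * (log n / n ^ 2) + 3 / 2 * C * (1 / n ^ 2) := by
    simp only [defect] at hxC
    rw [show 9 * a / 4 * (log n / n ^ 2) + 3 / 2 * C * (1 / n ^ 2)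
      = 3 / 2 * (3 * a / 2 * log n + C) / n ^ 2 by ring]
    exact div_le_div_of_nonneg_right (by linarith) (by positivity)
  simp only [defect]
  linarith

lemma le_add_of_sub_le_sub {d g : ℕ → ℝ} {k₀ : ℕ} (hg : ∀ k ≥ k₀, 0 ≤ g k)
    (h : ∀ k ≥ k₀, d (k + 1) - d k ≤ g k - g (k + 1)) :
    ∀ k ≥ k₀, d k ≤ d k₀ + g k₀ := by
  have hanti : AntitoneOn (d + g) {k | k₀ ≤ k} :=
    antitoneOn_nat_Ici_of_succ_le fun k hk => by
      simp only [Pi.add_apply]; linarith [h k hk]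
  intro k hk
  have := hanti (le_refl k₀) hk hk
  simp only [Pi.add_apply] at this
  linarith [hg k hk]

lemma exists_abs_defect_le {x : ℕ → ℝ} {a s B : ℝ} {k₀ : ℕ} (ha : 0 < a) (hs : 1 ≤ s)
    (hB : 0 ≤ B) (hgrow : ∀ k ≥ k₀, a * (s + k) ≤ x k)
    (hlow : ∀ k ≥ k₀, x k + a + 3 / 2 * a ^ 2 / x k ≤ x (k + 1))
    (hup : ∀ k ≥ k₀, x (k + 1) ≤ x k + a + 3 / 2 * a ^ 2 / x k + B / x k ^ 2) :
    ∃ C, ∀ k ≥ k₀, |defect a (s + k) (x k)| ≤ C := by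
  set d : ℕ → ℝ := fun k => defect a (s + k) (x k)
  have hn (k : ℕ) : 1 ≤ s + k := by linarith [k.cast_nonneg (α := ℝ)]
  have hcast (k : ℕ) : s + ((k + 1 : ℕ) : ℝ) = s + k + 1 := by push_cast; ring
  set γ := 3 * a / 2 + 2 * B / a ^ 2
  have hU := le_add_of_sub_le_sub (d := d) (g := fun k => γ * (1 / (s + k)))
    (fun k _ => mul_nonneg (by positivity) (one_div_nonneg.2 (by linarith [hn k])))
    fun k hk => by
      simpa only [d, hcast, mul_sub] using
        defect_succ_sub_le ha hB (hn k) (hgrow k hk) (hup k hk)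
  set CU := max (d k₀ + γ * (1 / (s + k₀))) 0
  set g : ℕ → ℝ := fun k =>
    9 * a / 2 * ((1 + log (s + k)) / (s + k)) + 3 * CU * (1 / (s + k))
  have hL := le_add_of_sub_le_sub (d := -d) (g := g)
    (fun k _ => by
      have := log_nonneg (hn k)
      have := hn k
      simp only [g]; positivity)
    fun k hk => by
      have := sub_le_defect_succ_sub ha (le_max_right _ _) (hn k) (hgrow k hk)
        ((hU k hk).trans (le_max_left _ _)) (hlow k hk)
      simp only [d, g, hcast, Pi.neg_apply] at this ⊢
      linarith
  refine ⟨max CU (g k₀ - d k₀), fun k hk => abs_le.2 ⟨?_, ?_⟩⟩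
  · have := hL k hk
    simp only [Pi.neg_apply] at this
    linarith [le_max_right CU (g k₀ - d k₀)]
  · linarith [hU k hk, le_max_left (d k₀ + γ * (1 / (s + k₀))) 0,
      le_max_left CU (g k₀ - d k₀)]

lemma exists_pos_forall_abs_le_of_forall_ge {f : ℕ → ℝ} {k₀ : ℕ} {C : ℝ}
    (h : ∀ k ≥ k₀, |f k| ≤ C) : ∃ C' > 0, ∀ k, |f k| ≤ C' := by
  obtain ⟨C', hC'⟩ := (Filter.isBoundedUnder_of_eventually_le
    (Filter.eventually_atTop.2 ⟨k₀, h⟩)).bddAbove_range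
  exact ⟨max C' 1, by positivity, fun k => (hC' ⟨k, rfl⟩).trans (le_max_left _ _)⟩

lemma abs_sub_profile_sub_one_le {a n x : ℝ} (ha : 0 ≤ a) (hn : 2 ≤ n) :
    |x - (a * (n - 1) + 3 * a / 2 * log (n - 1))| ≤ |defect a n x| + a + 3 * a / 2 := by
  have hlog0 : 0 ≤ log n - log (n - 1) :=
    sub_nonneg.2 (log_le_log (by linarith) (by linarith))
  have hlog1 : log n - log (n - 1) ≤ 1 := by
    have := log_add_one_sub_log_le (n := n - 1) (by linarith)
    rw [sub_add_cancel] at this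
    exact this.trans ((div_le_one (by linarith)).2 (by linarith))
  have e : x - (a * (n - 1) + 3 * a / 2 * log (n - 1))
      = defect a n x + a + 3 * a / 2 * (log n - log (n - 1)) := by
    simp only [defect]; ring
  rw [e]
  calc |defect a n x + a + 3 * a / 2 * (log n - log (n - 1))|
      ≤ |defect a n x| + |a| + |3 * a / 2 * (log n - log (n - 1))| := abs_add_three _ _ _
    _ ≤ |defect a n x| + a + 3 * a / 2 := by
      rw [abs_of_nonneg ha, abs_of_nonneg (mul_nonneg (by positivity) hlog0)]
      nlinarith

end Recurrence

lemma add_mul_le_iterate_omegaMap {Δ w : ℝ} (hΔ0 : 0 ≤ Δ) (hΔ1 : Δ ≤ 1) (hw : 1 < w)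
    (k : ℕ) :
    w + Δ * (4 / (3 * π)) * k ≤ (omegaMap Δ)^[k] w := by
  induction k with
  | zero => simp
  | succ k ih =>
    have ha : 0 ≤ Δ * (4 / (3 * π)) := by positivity
    have hk : 1 < (omegaMap Δ)^[k] w := by nlinarith [k.cast_nonneg (α := ℝ)]
    rw [Function.iterate_succ_apply']
    have := add_le_omegaMap hΔ0 hΔ1 hk
    have : 0 ≤ 3 / 2 * (Δ * (4 / (3 * π))) ^ 2 / (omegaMap Δ)^[k] w := by positivity
    push_cast
    linarith

/-- Propagation of inverse cosine distances: for fixed `w > 1` there is `C > 0` with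
`|ω^∘k(w) - (w + Δ 4/(3π) (k-1) + Δ (2/π) log(Δ⁻¹ (3π/4) w + k - 1))| ≤ C` for all `k ≥ 1`. -/
theorem omega_iterate_propagation (Δ : ℝ) (hΔ : Δ ∈ Set.Ioc (0 : ℝ) 1)
    (w : ℝ) (hw : 1 < w) :
    ∃ C : ℝ, 0 < C ∧ ∀ k : ℕ, 1 ≤ k →
      |(omegaMap Δ)^[k] w -
        (w + Δ * (4 / (3 * π)) * ((k : ℝ) - 1) +
          Δ * (2 / π) * Real.log (Δ⁻¹ * (3 * π / 4) * w + (k : ℝ) - 1))| ≤ C := by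
  obtain ⟨hΔ0, hΔ1⟩ := hΔ
  set a := Δ * (4 / (3 * π))
  set s := Δ⁻¹ * (3 * π / 4) * w
  have ha : 0 < a := by positivity
  have has : a * s = w := by simp only [a, s]; field_simp
  have hs : 2 ≤ s := by nlinarith [mul_four_div_three_mul_pi_le hΔ0.le hΔ1]
  have hgrow (k : ℕ) : a * (s + k) ≤ (omegaMap Δ)^[k] w := by
    rw [mul_add, has]; exact add_mul_le_iterate_omegaMap hΔ0.le hΔ1 hw k
  have h4 : ∀ k ≥ ⌈4 / a⌉₊, 4 ≤ (omegaMap Δ)^[k] w := fun k hk => by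
    have : 4 / a ≤ k := (Nat.le_ceil _).trans (Nat.cast_le.2 hk)
    rw [div_le_iff₀ ha] at this
    nlinarith [hgrow k]
  obtain ⟨C, hC⟩ := exists_abs_defect_le (B := 10) ha (by linarith) (by norm_num)
    (fun k _ => hgrow k)
    (fun k hk => by
      rw [Function.iterate_succ_apply']; exact add_le_omegaMap hΔ0.le hΔ1 (by linarith [h4 k hk]))
    (fun k hk => by rw [Function.iterate_succ_apply']; exact omegaMap_le hΔ0.le hΔ1 (h4 k hk))
  have hcoef : Δ * (2 / π) = 3 * a / 2 := by simp only [a]; field_simp; ring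
  obtain ⟨C', hC'0, hC'⟩ := exists_pos_forall_abs_le_of_forall_ge (C := C + a + 3 * a / 2)
    (f := fun k : ℕ => (omegaMap Δ)^[k] w - (a * (s + k - 1) + 3 * a / 2 * log (s + k - 1)))
    fun k hk => (abs_sub_profile_sub_one_le ha.le (by linarith [k.cast_nonneg (α := ℝ)])).trans
      (by linarith [hC k hk])
  refine ⟨C', hC'0, fun k _ => ?_⟩
  convert hC' k using 3
  rw [hcoef, ← has]
  ring
end

section
/- Let $\tau \in \mathbb{R}^n$ with all entries positive, $\underline{\tau} = \min_i \tau_i$, $\overline{\tau} = \max_i \tau_i$, and $c \in [0,1]$. Consider the symmetric matrix $M = (1-c)D_\tau^2 + c\, \tau \tau^T$, where $D_\tau$ is the diagonal matrix with entries $\tau$. Then $\lambda_2(M) \leq (1-c)\overline{\tau}^2$, $\lambda_n(M) \geq (1-c)\underline{\tau}^2$, and $(1+(n-1)c)\underline{\tau}^2 \leq \lambda_1(M) \leq (1+(n-1)c)\overline{\tau}^2$, where eigenvalues are ordered $\lambda_1 \geq \cdots \geq \lambda_n$. -/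
/-!
The quadratic form of `M` is `(1 - c) ∑ τᵢ² xᵢ² + c (τ ⬝ x)²`. Bounding it on all vectors
bounds every eigenvalue between `(1 - c) τ̲²` and `(1 + (n - 1) c) τ̄²`, and its value at `τ`
bounds the Rayleigh quotient of `τ`, hence `λ₁`, from below. On `τ^⊥` the rank-one term
vanishes, so there the form is at most `(1 - c) τ̄²`; since the span of the top two eigenvectors
meets `τ^⊥` nontrivially, this bounds `λ₂`.
-/

open Matrix

section DotProductBounds

variable {ι : Type*} [Fintype ι]

theorem sum_mul_sq_le_mul_dotProduct_self {d : ι → ℝ} {D : ℝ} (h : ∀ i, d i ≤ D)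
    (x : ι → ℝ) : ∑ i, d i * x i ^ 2 ≤ D * (x ⬝ᵥ x) := by
  rw [dotProduct, Finset.mul_sum]
  exact Finset.sum_le_sum fun i _ => by nlinarith [h i, sq_nonneg (x i)]

theorem mul_dotProduct_self_le_sum_mul_sq {d : ι → ℝ} {D : ℝ} (h : ∀ i, D ≤ d i)
    (x : ι → ℝ) : D * (x ⬝ᵥ x) ≤ ∑ i, d i * x i ^ 2 := by
  rw [dotProduct, Finset.mul_sum]
  exact Finset.sum_le_sum fun i _ => by nlinarith [h i, sq_nonneg (x i)]

theorem dotProduct_sq_le_dotProduct_self_mul (v w : ι → ℝ) :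
    (v ⬝ᵥ w) ^ 2 ≤ (v ⬝ᵥ v) * (w ⬝ᵥ w) := by
  simpa only [dotProduct, sq] using Finset.sum_mul_sq_le_sq_mul_sq Finset.univ v w

theorem dotProduct_self_le_card_mul {v : ι → ℝ} {hi : ℝ} (h0 : ∀ i, 0 ≤ v i)
    (h : ∀ i, v i ≤ hi) : v ⬝ᵥ v ≤ Fintype.card ι * hi ^ 2 := by
  simpa [dotProduct, sq, mul_comm] using
    sum_mul_sq_le_mul_dotProduct_self (fun i => pow_le_pow_left₀ (h0 i) (h i) 2) 1

theorem card_mul_le_dotProduct_self {v : ι → ℝ} {lo : ℝ} (h0 : 0 ≤ lo)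
    (h : ∀ i, lo ≤ v i) : Fintype.card ι * lo ^ 2 ≤ v ⬝ᵥ v := by
  simpa [dotProduct, sq, mul_comm] using
    mul_dotProduct_self_le_sum_mul_sq (fun i => pow_le_pow_left₀ h0 (h i) 2) 1

end DotProductBounds

namespace Matrix.IsHermitian

variable {n : Type*} [Fintype n] [DecidableEq n] {A : Matrix n n ℝ} (hA : A.IsHermitian)
include hA

theorem dotProduct_eigenvectorBasis (i j : n) :
    ⇑(hA.eigenvectorBasis i) ⬝ᵥ ⇑(hA.eigenvectorBasis j) = if i = j then 1 else 0 := by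
  rw [← orthonormal_iff_ite.mp hA.eigenvectorBasis.orthonormal i j,
    EuclideanSpace.inner_eq_star_dotProduct, star_trivial, dotProduct_comm]

theorem eigenvalues_eq_dotProduct_mulVec (i : n) :
    hA.eigenvalues i = ⇑(hA.eigenvectorBasis i) ⬝ᵥ A *ᵥ ⇑(hA.eigenvectorBasis i) := by
  simpa using hA.eigenvalues_eq i

theorem eigenvalues_le_of_forall_dotProduct_mulVec_le {m : ℝ}
    (h : ∀ x, x ⬝ᵥ A *ᵥ x ≤ m * (x ⬝ᵥ x)) (i : n) : hA.eigenvalues i ≤ m := by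
  simpa [← hA.eigenvalues_eq_dotProduct_mulVec, hA.dotProduct_eigenvectorBasis] using
    h (hA.eigenvectorBasis i)

theorem le_eigenvalues_of_forall_le_dotProduct_mulVec {m : ℝ}
    (h : ∀ x, m * (x ⬝ᵥ x) ≤ x ⬝ᵥ A *ᵥ x) (i : n) : m ≤ hA.eigenvalues i := by
  simpa [← hA.eigenvalues_eq_dotProduct_mulVec, hA.dotProduct_eigenvectorBasis] using
    h (hA.eigenvectorBasis i)

theorem posSemidef_smul_one_sub {m : ℝ} (h : ∀ i, hA.eigenvalues i ≤ m) :
    (m • 1 - A).PosSemidef := by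
  have hdiag : diagonal (fun i => m - hA.eigenvalues i)
      = m • 1 - diagonal (RCLike.ofReal ∘ hA.eigenvalues) := by
    ext i j
    by_cases hij : i = j <;> simp [hij]
  have hconj : m • 1 - A = Unitary.conjStarAlgAut ℝ _ hA.eigenvectorUnitary
      (diagonal fun i => m - hA.eigenvalues i) := by
    rw [hdiag, map_sub, map_smul, map_one, ← hA.spectral_theorem]
  rw [hconj, Unitary.conjStarAlgAut_apply,
    (Unitary.isUnit_coe).posSemidef_star_right_conjugate_iff, posSemidef_diagonal_iff]
  exact fun i => sub_nonneg.mpr (h i)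

theorem dotProduct_mulVec_le_of_eigenvalues_le {m : ℝ} (h : ∀ i, hA.eigenvalues i ≤ m)
    (x : n → ℝ) : x ⬝ᵥ A *ᵥ x ≤ m * (x ⬝ᵥ x) := by
  have := (hA.posSemidef_smul_one_sub h).dotProduct_mulVec_nonneg x
  rw [star_trivial, sub_mulVec, smul_mulVec, one_mulVec, dotProduct_sub, dotProduct_smul,
    smul_eq_mul] at this
  linarith

theorem dotProduct_mulVec_smul_add_smul_eigenvectorBasis {i j : n} (hij : i ≠ j) (a d : ℝ) :
    (a • ⇑(hA.eigenvectorBasis i) + d • ⇑(hA.eigenvectorBasis j)) ⬝ᵥ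
        A *ᵥ (a • ⇑(hA.eigenvectorBasis i) + d • ⇑(hA.eigenvectorBasis j)) =
      a ^ 2 * hA.eigenvalues i + d ^ 2 * hA.eigenvalues j := by
  simp only [mulVec_add, mulVec_smul, mulVec_eigenvectorBasis, add_dotProduct, dotProduct_add,
    smul_dotProduct, dotProduct_smul, smul_eq_mul, hA.dotProduct_eigenvectorBasis, hij,
    hij.symm, if_true, if_false]
  ring

theorem dotProduct_self_smul_add_smul_eigenvectorBasis {i j : n} (hij : i ≠ j) (a d : ℝ) :
    (a • ⇑(hA.eigenvectorBasis i) + d • ⇑(hA.eigenvectorBasis j)) ⬝ᵥ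
        (a • ⇑(hA.eigenvectorBasis i) + d • ⇑(hA.eigenvectorBasis j)) = a ^ 2 + d ^ 2 := by
  simp only [add_dotProduct, dotProduct_add, smul_dotProduct, dotProduct_smul, smul_eq_mul,
    hA.dotProduct_eigenvectorBasis, hij, hij.symm, if_true, if_false]
  ring

theorem min_eigenvalues_le_of_forall_dotProduct_eq_zero {i j : n} (hij : i ≠ j) (w : n → ℝ)
    {m : ℝ} (h : ∀ x, w ⬝ᵥ x = 0 → x ⬝ᵥ A *ᵥ x ≤ m * (x ⬝ᵥ x)) :
    min (hA.eigenvalues i) (hA.eigenvalues j) ≤ m := by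
  set u := ⇑(hA.eigenvectorBasis i)
  set v := ⇑(hA.eigenvectorBasis j)
  suffices key : ∀ a d : ℝ, a ≠ 0 ∨ d ≠ 0 → w ⬝ᵥ (a • u + d • v) = 0 →
      min (hA.eigenvalues i) (hA.eigenvalues j) ≤ m by
    by_cases hu : w ⬝ᵥ u = 0
    · exact key 1 0 (.inl one_ne_zero) (by simpa using hu)
    · refine key (w ⬝ᵥ v) (-(w ⬝ᵥ u)) (.inr (neg_ne_zero.mpr hu)) ?_
      simp only [dotProduct_add, dotProduct_smul, smul_eq_mul]
      ring
  intro a d had hw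
  have hpos : 0 < a ^ 2 + d ^ 2 := by
    rcases had with ha | hd <;> positivity
  have hx := h _ hw
  rw [hA.dotProduct_mulVec_smul_add_smul_eigenvectorBasis hij,
    hA.dotProduct_self_smul_add_smul_eigenvectorBasis hij] at hx
  refine le_of_mul_le_mul_right ?_ hpos
  calc min (hA.eigenvalues i) (hA.eigenvalues j) * (a ^ 2 + d ^ 2)
      ≤ a ^ 2 * hA.eigenvalues i + d ^ 2 * hA.eigenvalues j := by
        nlinarith [min_le_left (hA.eigenvalues i) (hA.eigenvalues j),
          min_le_right (hA.eigenvalues i) (hA.eigenvalues j), sq_nonneg a, sq_nonneg d]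
    _ ≤ m * (a ^ 2 + d ^ 2) := hx

end Matrix.IsHermitian

section RankOnePerturbation

variable {ι : Type*} [DecidableEq ι]

def rankOnePerturbation (τ : ι → ℝ) (c : ℝ) : Matrix ι ι ℝ :=
  (1 - c) • diagonal (τ ^ 2) + c • vecMulVec τ τ

theorem of_eq_rankOnePerturbation (τ : ι → ℝ) (c : ℝ) :
    (of fun i j => (1 - c) * (if i = j then τ i ^ 2 else 0) + c * τ i * τ j) =
      rankOnePerturbation τ c := by
  ext i j
  by_cases hij : i = j <;> simp [rankOnePerturbation, vecMulVec_apply, hij, mul_assoc]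

variable [Fintype ι]

theorem dotProduct_rankOnePerturbation_mulVec (τ x : ι → ℝ) (c : ℝ) :
    x ⬝ᵥ rankOnePerturbation τ c *ᵥ x =
      (1 - c) * ∑ i, τ i ^ 2 * x i ^ 2 + c * (τ ⬝ᵥ x) ^ 2 := by
  have hdiag : x ⬝ᵥ diagonal (τ ^ 2) *ᵥ x = ∑ i, τ i ^ 2 * x i ^ 2 := by
    simp only [dotProduct, mulVec_diagonal, Pi.pow_apply]
    exact Finset.sum_congr rfl fun i _ => by ring
  have hrank : x ⬝ᵥ vecMulVec τ τ *ᵥ x = (τ ⬝ᵥ x) ^ 2 := by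
    rw [vecMulVec_mulVec, op_smul_eq_smul, dotProduct_smul, smul_eq_mul, dotProduct_comm x τ, sq]
  simp only [rankOnePerturbation, add_mulVec, smul_mulVec, dotProduct_add, dotProduct_smul,
    smul_eq_mul, hdiag, hrank]

variable {τ : ι → ℝ} {c lo hi : ℝ}

theorem le_dotProduct_rankOnePerturbation_mulVec (hc : c ∈ Set.Icc (0 : ℝ) 1) (hlo : 0 ≤ lo)
    (hτ : ∀ i, lo ≤ τ i) (x : ι → ℝ) :
    (1 - c) * lo ^ 2 * (x ⬝ᵥ x) ≤ x ⬝ᵥ rankOnePerturbation τ c *ᵥ x := by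
  have hsum := mul_dotProduct_self_le_sum_mul_sq (fun i => pow_le_pow_left₀ hlo (hτ i) 2) x
  rw [dotProduct_rankOnePerturbation_mulVec]
  nlinarith [hc.1, hc.2, sq_nonneg (τ ⬝ᵥ x)]

theorem dotProduct_rankOnePerturbation_mulVec_le_of_dotProduct_eq_zero (hc : c ≤ 1)
    (hτ0 : ∀ i, 0 ≤ τ i) (hτ : ∀ i, τ i ≤ hi) {x : ι → ℝ} (hx : τ ⬝ᵥ x = 0) :
    x ⬝ᵥ rankOnePerturbation τ c *ᵥ x ≤ (1 - c) * hi ^ 2 * (x ⬝ᵥ x) := by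
  have hsum := sum_mul_sq_le_mul_dotProduct_self (fun i => pow_le_pow_left₀ (hτ0 i) (hτ i) 2) x
  rw [dotProduct_rankOnePerturbation_mulVec, hx]
  nlinarith

theorem dotProduct_rankOnePerturbation_mulVec_le (hc : c ∈ Set.Icc (0 : ℝ) 1)
    (hτ0 : ∀ i, 0 ≤ τ i) (hτ : ∀ i, τ i ≤ hi) (x : ι → ℝ) :
    x ⬝ᵥ rankOnePerturbation τ c *ᵥ x ≤
      (1 + ((Fintype.card ι : ℝ) - 1) * c) * hi ^ 2 * (x ⬝ᵥ x) := by
  have hsum := sum_mul_sq_le_mul_dotProduct_self (fun i => pow_le_pow_left₀ (hτ0 i) (hτ i) 2) x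
  have hrank : (τ ⬝ᵥ x) ^ 2 ≤ Fintype.card ι * hi ^ 2 * (x ⬝ᵥ x) :=
    (dotProduct_sq_le_dotProduct_self_mul τ x).trans <| mul_le_mul_of_nonneg_right
      (dotProduct_self_le_card_mul hτ0 hτ) (dotProduct_star_self_nonneg x)
  rw [dotProduct_rankOnePerturbation_mulVec]
  nlinarith [mul_le_mul_of_nonneg_left hsum (sub_nonneg.mpr hc.2),
    mul_le_mul_of_nonneg_left hrank hc.1]

theorem le_dotProduct_rankOnePerturbation_mulVec_self (hc : c ∈ Set.Icc (0 : ℝ) 1)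
    (hlo : 0 ≤ lo) (hτ : ∀ i, lo ≤ τ i) :
    (1 + ((Fintype.card ι : ℝ) - 1) * c) * lo ^ 2 * (τ ⬝ᵥ τ) ≤
      τ ⬝ᵥ rankOnePerturbation τ c *ᵥ τ := by
  have hsum := mul_dotProduct_self_le_sum_mul_sq (fun i => pow_le_pow_left₀ hlo (hτ i) 2) τ
  have hrank : Fintype.card ι * lo ^ 2 * (τ ⬝ᵥ τ) ≤ (τ ⬝ᵥ τ) ^ 2 := by
    rw [sq (τ ⬝ᵥ τ)]
    exact mul_le_mul_of_nonneg_right (card_mul_le_dotProduct_self hlo hτ)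
      (dotProduct_star_self_nonneg τ)
  rw [dotProduct_rankOnePerturbation_mulVec]
  nlinarith [mul_le_mul_of_nonneg_left hsum (sub_nonneg.mpr hc.2),
    mul_le_mul_of_nonneg_left hrank hc.1]

end RankOnePerturbation

/-- Spectral bounds for `M = (1-c) D_τ² + c ττᵀ`: with eigenvalues `μ` listed in
decreasing order, `μ₂ ≤ (1-c) τ̄²`, `μₙ ≥ (1-c) τ̲²`, and
`(1+(n-1)c) τ̲² ≤ μ₁ ≤ (1+(n-1)c) τ̄²`. -/
theorem rank_one_perturbation_spectrum (n : ℕ) (hn : 2 ≤ n)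
    (τ : Fin n → ℝ) (hτ : ∀ i, 0 < τ i) (c : ℝ) (hc : c ∈ Set.Icc (0 : ℝ) 1)
    (M : Matrix (Fin n) (Fin n) ℝ)
    (hMdef : M = Matrix.of fun i j =>
      (1 - c) * (if i = j then τ i ^ 2 else 0) + c * τ i * τ j)
    (hM : M.IsHermitian)
    (μ : Fin n → ℝ) (hmono : Antitone μ)
    (hperm : ∃ σ : Equiv.Perm (Fin n), ∀ i, μ i = hM.eigenvalues (σ i)) :
    μ ⟨1, by omega⟩ ≤ (1 - c) * (⨆ i, τ i) ^ 2 ∧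
    (1 - c) * (⨅ i, τ i) ^ 2 ≤ μ ⟨n - 1, by omega⟩ ∧
    (1 + ((n : ℝ) - 1) * c) * (⨅ i, τ i) ^ 2 ≤ μ ⟨0, by omega⟩ ∧
    μ ⟨0, by omega⟩ ≤ (1 + ((n : ℝ) - 1) * c) * (⨆ i, τ i) ^ 2 := by
  obtain ⟨σ, hσ⟩ := hperm
  rw [of_eq_rankOnePerturbation] at hMdef
  subst hMdef
  have hτ0 i : 0 ≤ τ i := (hτ i).le
  have hlo : 0 ≤ ⨅ i, τ i := Real.iInf_nonneg hτ0
  have hτlo i : (⨅ i, τ i) ≤ τ i := ciInf_le (Finite.bddBelow_range τ) i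
  have hτhi i : τ i ≤ ⨆ i, τ i := le_ciSup (Finite.bddAbove_range τ) i
  have hcard : (Fintype.card (Fin n) : ℝ) = n := by simp
  have hμ_top j : hM.eigenvalues j ≤ μ ⟨0, by omega⟩ := by
    simpa [hσ] using hmono (show (⟨0, by omega⟩ : Fin n) ≤ σ.symm j by simp [Fin.le_def])
  have hττ : 0 < τ ⬝ᵥ τ :=
    Finset.sum_pos (fun i _ => mul_pos (hτ i) (hτ i)) ⟨⟨0, by omega⟩, Finset.mem_univ _⟩
  refine ⟨?_, ?_, ?_, ?_⟩
  · have h01 : σ ⟨0, by omega⟩ ≠ σ ⟨1, by omega⟩ := σ.injective.ne (by simp [Fin.ext_iff])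
    have := hM.min_eigenvalues_le_of_forall_dotProduct_eq_zero h01 τ fun x hx =>
      dotProduct_rankOnePerturbation_mulVec_le_of_dotProduct_eq_zero hc.2 hτ0 hτhi hx
    rwa [← hσ, ← hσ, min_eq_right (hmono (by simp [Fin.le_def]))] at this
  · rw [hσ]
    exact hM.le_eigenvalues_of_forall_le_dotProduct_mulVec
      (le_dotProduct_rankOnePerturbation_mulVec hc hlo hτlo) _
  · refine le_of_mul_le_mul_right ?_ hττ
    have := le_dotProduct_rankOnePerturbation_mulVec_self hc hlo hτlo
    rw [hcard] at this
    exact this.trans (hM.dotProduct_mulVec_le_of_eigenvalues_le hμ_top τ)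
  · rw [hσ, ← hcard]
    exact hM.eigenvalues_le_of_forall_dotProduct_mulVec_le
      (dotProduct_rankOnePerturbation_mulVec_le hc hτ0 hτhi) _
end
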